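/- arXiv:2209.08047 — 6 statements merged into one kernel-verified Lean document; each statement's English description precedes it below -/
import Mathlib

section
/- Let ℓ be any prime number and n ≥ 1 an integer. Then the rational number G_n := ℓ(1 − ℓ^n)B_n is an integer. -/
/-!
For odd `n` this is immediate: `B₁ = -1/2` and `ℓ(ℓ - 1)` is even, while `Bₙ = 0` for odd
`n > 1`. For even `n`, von Staudt–Clausen writes `Bₙ` as an integer minus `∑ 1/p` over the primes
`p` with `(p - 1) ∣ n`, and each such `p` divides `ℓ(1 - ℓⁿ)`: it divides `ℓ`, or else
`ℓⁿ ≡ 1 mod p` by Fermat's little theorem. So the factor `ℓ(1 - ℓⁿ)` clears every denominator.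
-/

/-- The `ℓ`-Genocchi number `G_n = ℓ(1 - ℓ^n)B_n`, a priori a rational number. -/
noncomputable def genocchi (ℓ : ℕ) (n : ℕ) : ℚ :=
  (ℓ : ℚ) * (1 - (ℓ : ℚ) ^ n) * bernoulli n

open Finset

theorem prime_dvd_mul_one_sub_pow {p : ℕ} (hp : p.Prime) (a : ℤ) {n : ℕ} (hn : p - 1 ∣ n) :
    (p : ℤ) ∣ a * (1 - a ^ n) := by
  have := Fact.mk hp
  rw [← ZMod.intCast_zmod_eq_zero_iff_dvd]
  push_cast
  obtain ⟨m, rfl⟩ := hn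
  by_cases ha : (a : ZMod p) = 0
  · rw [ha, zero_mul]
  · rw [pow_mul, ZMod.pow_card_sub_one_eq_one ha, one_pow, sub_self, mul_zero]

theorem int_mul_one_sub_pow_mul_bernoulli_mem_bot_of_even (a : ℤ) {n : ℕ} (hn : Even n) :
    (a : ℚ) * (1 - (a : ℚ) ^ n) * bernoulli n ∈ (⊥ : Subring ℚ) := by
  obtain ⟨k, rfl⟩ := hn
  rw [← two_mul]
  set c : ℤ := a * (1 - a ^ (2 * k)) with hc
  set primes := (range (2 * k + 2)).filter fun p ↦ p.Prime ∧ (p - 1) ∣ 2 * k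
  have hvsc : bernoulli (2 * k) + ∑ p ∈ primes, (1 : ℚ) / p ∈ (⊥ : Subring ℚ) :=
    Subring.mem_bot.mpr (Bernoulli.vonStaudt_clausen k)
  have hterm : ∀ p ∈ primes, (c : ℚ) / p ∈ (⊥ : Subring ℚ) := by
    intro p hp
    obtain ⟨hp, hdvd⟩ := (mem_filter.mp hp).2
    obtain ⟨d, hd⟩ : (p : ℤ) ∣ c := prime_dvd_mul_one_sub_pow hp a hdvd
    refine Subring.mem_bot.mpr ⟨d, ?_⟩
    rw [hd, Int.cast_mul, Int.cast_natCast, mul_div_cancel_left₀ _ (by exact_mod_cast hp.ne_zero)]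
  have hsplit : (a : ℚ) * (1 - (a : ℚ) ^ (2 * k)) * bernoulli (2 * k)
      = c * (bernoulli (2 * k) + ∑ p ∈ primes, (1 : ℚ) / p) - ∑ p ∈ primes, (c : ℚ) / p := by
    simp only [hc, mul_add, mul_sum, mul_one_div]
    push_cast
    ring
  rw [hsplit]
  exact sub_mem (mul_mem (intCast_mem _ c) hvsc) (sum_mem hterm)

theorem int_mul_one_sub_pow_mul_bernoulli_mem_bot_of_odd (a : ℤ) {n : ℕ} (hn : Odd n) :
    (a : ℚ) * (1 - (a : ℚ) ^ n) * bernoulli n ∈ (⊥ : Subring ℚ) := by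
  rcases (Nat.succ_le_of_lt hn.pos).eq_or_lt with rfl | hn1
  · obtain ⟨m, hm⟩ := Int.even_mul_pred_self a
    refine Subring.mem_bot.mpr ⟨m, ?_⟩
    rw [bernoulli_one, pow_one]
    have hm' : (a : ℚ) * (a - 1) = m + m := by exact_mod_cast hm
    linear_combination (-1 / 2 : ℚ) * hm'
  · rw [bernoulli_eq_zero_of_odd hn hn1, mul_zero]
    exact zero_mem _

theorem int_mul_one_sub_pow_mul_bernoulli_mem_bot (a : ℤ) (n : ℕ) :
    (a : ℚ) * (1 - (a : ℚ) ^ n) * bernoulli n ∈ (⊥ : Subring ℚ) :=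
  (Nat.even_or_odd n).elim (int_mul_one_sub_pow_mul_bernoulli_mem_bot_of_even a)
    (int_mul_one_sub_pow_mul_bernoulli_mem_bot_of_odd a)

theorem genocchi_isInteger_general (ℓ : ℕ) (n : ℕ) :
    ∃ z : ℤ, genocchi ℓ n = (z : ℚ) := by
  obtain ⟨z, hz⟩ := Subring.mem_bot.mp (int_mul_one_sub_pow_mul_bernoulli_mem_bot ℓ n)
  exact ⟨z, by rw [genocchi, hz, Int.cast_natCast]⟩

/-- For any prime `ℓ` and any `n ≥ 1`, the rational number
`G_n = ℓ(1 - ℓ^n)B_n` is an integer. -/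
theorem genocchi_isInteger (ℓ : ℕ) (hℓ : ℓ.Prime) (n : ℕ) (hn : 1 ≤ n) :
    ∃ z : ℤ, genocchi ℓ n = (z : ℚ) :=
  genocchi_isInteger_general ℓ n
end

section
/- Let ℓ be a prime and ζ_ℓ = e^{2πi/ℓ}. In the ring of formal power series ℂ⟦t⟧ one has the identity t · Σ_{a=1}^{ℓ−1} ζ_ℓ^a · (ζ_ℓ^a − e^t)^{−1} = Σ_{n≥1} (1 − ℓ^n) B_n t^n/n!, where e^t denotes the formal exponential power series Σ_{k≥0} t^k/k!, and each factor ζ_ℓ^a − e^t is invertible in ℂ⟦t⟧ because its constant term ζ_ℓ^a − 1 is nonzero. -/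
/-!
Let `ζ` be a primitive `ℓ`-th root of unity and `E = e^t`. Since `(ζ^a)^ℓ = 1`, the factor
`ζ^a - E` divides `E^ℓ - 1` with a geometric sum as cofactor. Summed over all `a < ℓ`, these
cofactors collapse to the constant `ℓ` by `∑_{a<ℓ} ζ^{aj} = ℓ·[ℓ ∣ j]`; the term `a = 0` is
`∑_{i<ℓ} E^i`, so `(∑_{a=1}^{ℓ-1} ζ^a (ζ^a - E)⁻¹)(E^ℓ - 1) = ∑_{i<ℓ} E^i - ℓ`.
With `B(t) = t/(e^t - 1)` one has `t = B(t)(E - 1)` and `ℓt = B(ℓt)(E^ℓ - 1)`, so after multiplying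
by `t` and cancelling `E^ℓ - 1` the left-hand side becomes `B(t) - B(ℓt)`.
-/

open PowerSeries Finset

namespace IsPrimitiveRoot

variable {R : Type*} [CommRing R] [IsDomain R] {ζ : R} {ℓ : ℕ}

theorem geom_sum_pow_eq_ite (hζ : IsPrimitiveRoot ζ ℓ) (j : ℕ) :
    ∑ a ∈ range ℓ, (ζ ^ j) ^ a = if ℓ ∣ j then (ℓ : R) else 0 := by
  split_ifs with hj
  · simp [(hζ.pow_eq_one_iff_dvd j).mpr hj]
  · have hne : ζ ^ j - 1 ≠ 0 := sub_ne_zero.mpr fun h => hj ((hζ.pow_eq_one_iff_dvd j).mp h)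
    have hpow : (ζ ^ j) ^ ℓ = 1 := by rw [← pow_mul, mul_comm, pow_mul, hζ.pow_eq_one, one_pow]
    simpa [hpow, hne] using geom_sum_mul (ζ ^ j) ℓ

theorem sum_pow_mul_geom_sum₂ (hζ : IsPrimitiveRoot ζ ℓ) (x : R) :
    ∑ a ∈ range ℓ, ζ ^ a * ∑ i ∈ range ℓ, x ^ i * (ζ ^ a) ^ (ℓ - 1 - i) = ℓ := by
  have hterm : ∀ a, ∀ i ∈ range ℓ,
      ζ ^ a * (x ^ i * (ζ ^ a) ^ (ℓ - 1 - i)) = x ^ i * (ζ ^ (ℓ - i)) ^ a := by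
    intro a i hi
    have : ℓ - i = ℓ - 1 - i + 1 := by grind
    rw [this, ← pow_mul, mul_comm, pow_mul]
    ring
  have hdvd : ∀ i ∈ range ℓ, (ℓ ∣ ℓ - i ↔ i = 0) := by
    intro i hi
    rw [mem_range] at hi
    refine ⟨fun h => ?_, fun h => by simp [h]⟩
    by_contra h0
    exact absurd (Nat.le_of_dvd (by omega) h) (by omega)
  calc ∑ a ∈ range ℓ, ζ ^ a * ∑ i ∈ range ℓ, x ^ i * (ζ ^ a) ^ (ℓ - 1 - i)
      = ∑ i ∈ range ℓ, x ^ i * ∑ a ∈ range ℓ, (ζ ^ (ℓ - i)) ^ a := by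
        simp_rw [mul_sum]
        rw [sum_comm]
        exact sum_congr rfl fun i hi => sum_congr rfl fun a _ => hterm a i hi
    _ = ∑ i ∈ range ℓ, if i = 0 then (ℓ : R) else 0 := by
        refine sum_congr rfl fun i hi => ?_
        simp only [hζ.geom_sum_pow_eq_ite, hdvd i hi]
        split_ifs with h <;> simp [h]
    _ = ℓ := by
        rw [sum_ite_eq']
        split_ifs with h <;> simp_all

theorem pow_ne_one_of_mem_Icc {M : Type*} [CommMonoid M] {ζ : M} {ℓ a : ℕ}
    (hζ : IsPrimitiveRoot ζ ℓ) (ha : a ∈ Icc 1 (ℓ - 1)) : ζ ^ a ≠ 1 := by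
  rw [mem_Icc] at ha
  exact hζ.pow_ne_one_of_pos_of_lt (by omega) (by omega)

end IsPrimitiveRoot

namespace PowerSeries

variable {K : Type*} [Field K]

theorem C_mul_inv_C_sub_mul_pow_sub_one {c : K} {ℓ : ℕ} (hc : c ^ ℓ = 1) (f : K⟦X⟧)
    (hf : constantCoeff f ≠ c) :
    C c * (C c - f)⁻¹ * (f ^ ℓ - 1) = -(C c * ∑ i ∈ range ℓ, f ^ i * C c ^ (ℓ - 1 - i)) := by
  have hinv : (C c - f)⁻¹ * (C c - f) = 1 :=
    PowerSeries.inv_mul_cancel _ (by simpa [sub_eq_zero] using hf.symm)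
  have hfactor := geom_sum₂_mul f (C c) ℓ
  rw [← map_pow, hc, map_one] at hfactor
  linear_combination (-(C c * (C c - f)⁻¹)) * hfactor
    - C c * (∑ i ∈ range ℓ, f ^ i * C c ^ (ℓ - 1 - i)) * hinv

variable [CharZero K]

theorem sum_C_mul_inv_C_sub_exp_mul {ζ : K} {ℓ : ℕ} (hζ : IsPrimitiveRoot ζ ℓ) :
    (∑ a ∈ Icc 1 (ℓ - 1), C (ζ ^ a) * (C (ζ ^ a) - exp K)⁻¹) * (exp K ^ ℓ - 1)
      = ∑ i ∈ range ℓ, exp K ^ i - ℓ := by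
  obtain rfl | hℓ := eq_or_ne ℓ 0
  · simp
  have hterm : ∀ a ∈ Icc 1 (ℓ - 1), C (ζ ^ a) * (C (ζ ^ a) - exp K)⁻¹ * (exp K ^ ℓ - 1)
      = -((C ζ) ^ a * ∑ i ∈ range ℓ, exp K ^ i * ((C ζ) ^ a) ^ (ℓ - 1 - i)) := by
    intro a ha
    rw [C_mul_inv_C_sub_mul_pow_sub_one, map_pow]
    · rw [← pow_mul, mul_comm, pow_mul, hζ.pow_eq_one, one_pow]
    · simpa [constantCoeff_exp] using (hζ.pow_ne_one_of_mem_Icc ha).symm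
  have hIcc : Icc 1 (ℓ - 1) = Ico 1 ℓ := by ext; simp; omega
  have hsum := (hζ.map_of_injective (C_injective (R := K))).sum_pow_mul_geom_sum₂ (exp K)
  rw [sum_range_eq_add_Ico _ (Nat.pos_of_ne_zero hℓ)] at hsum
  rw [sum_mul, sum_congr rfl hterm, sum_neg_distrib, hIcc]
  simp only [pow_zero, one_pow, mul_one, one_mul] at hsum
  linear_combination -hsum

theorem exp_pow_sub_one_ne_zero {ℓ : ℕ} (hℓ : ℓ ≠ 0) : exp K ^ ℓ - 1 ≠ 0 := by
  intro h
  have := congrArg (coeff 1) h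
  simp [exp_pow_eq_rescale_exp, coeff_exp, hℓ] at this

theorem rescale_bernoulliPowerSeries_mul_exp_pow_sub_one (ℓ : ℕ) :
    rescale (ℓ : K) (bernoulliPowerSeries K) * (exp K ^ ℓ - 1) = (ℓ : K⟦X⟧) * X := by
  simpa [exp_pow_eq_rescale_exp] using
    congrArg (rescale (ℓ : K)) (bernoulliPowerSeries_mul_exp_sub_one K)

theorem bernoulliPowerSeries_sub_rescale (c : K) :
    bernoulliPowerSeries K - rescale c (bernoulliPowerSeries K)
      = mk fun n => (1 - c ^ n) * (bernoulli n : K) / n.factorial := by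
  ext n
  simp only [bernoulliPowerSeries, map_sub, coeff_rescale, coeff_mk, eq_ratCast, Rat.cast_div,
    Rat.cast_natCast]
  ring

theorem X_mul_sum_C_mul_inv_C_sub_exp {ζ : K} {ℓ : ℕ} (hζ : IsPrimitiveRoot ζ ℓ) (hℓ : ℓ ≠ 0) :
    X * ∑ a ∈ Icc 1 (ℓ - 1), C (ζ ^ a) * (C (ζ ^ a) - exp K)⁻¹
      = bernoulliPowerSeries K - rescale (ℓ : K) (bernoulliPowerSeries K) := by
  refine mul_right_cancel₀ (exp_pow_sub_one_ne_zero hℓ) ?_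
  linear_combination X * sum_C_mul_inv_C_sub_exp_mul hζ
    + bernoulliPowerSeries K * geom_sum_mul (exp K) ℓ
    - (∑ i ∈ range ℓ, exp K ^ i) * bernoulliPowerSeries_mul_exp_sub_one K
    + rescale_bernoulliPowerSeries_mul_exp_pow_sub_one (K := K) ℓ

end PowerSeries

/-- For a prime `ℓ` and `ζ_ℓ = e^{2πi/ℓ}`, in `ℂ⟦t⟧` each `ζ_ℓ^a - e^t` (for
`1 ≤ a ≤ ℓ-1`) has nonzero constant term (hence is invertible), and
`t ⬝ Σ_{a=1}^{ℓ-1} ζ_ℓ^a (ζ_ℓ^a - e^t)⁻¹ = Σ_{n≥1} (1 - ℓ^n) B_n t^n / n!`. -/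
theorem genocchi_generating_function (ℓ : ℕ) (hℓ : ℓ.Prime) :
    (∀ a ∈ Finset.Icc 1 (ℓ - 1),
      PowerSeries.constantCoeff
        (PowerSeries.C (Complex.exp (2 * Real.pi * Complex.I / ℓ) ^ a)
          - PowerSeries.exp ℂ) ≠ 0) ∧
    (PowerSeries.X : PowerSeries ℂ) *
      ∑ a ∈ Finset.Icc 1 (ℓ - 1),
        PowerSeries.C (Complex.exp (2 * Real.pi * Complex.I / ℓ) ^ a) *
          (PowerSeries.C (Complex.exp (2 * Real.pi * Complex.I / ℓ) ^ a)
            - PowerSeries.exp ℂ)⁻¹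
      = PowerSeries.mk
          (fun n => (1 - (ℓ : ℂ) ^ n) * ((bernoulli n : ℚ) : ℂ) / n.factorial) := by
  have hζ := Complex.isPrimitiveRoot_exp ℓ hℓ.ne_zero
  refine ⟨fun a ha => ?_, ?_⟩
  · simpa [constantCoeff_exp, sub_eq_zero] using hζ.pow_ne_one_of_mem_Icc ha
  · rw [X_mul_sum_C_mul_inv_C_sub_exp hζ hℓ.ne_zero, bernoulliPowerSeries_sub_rescale]
end

section
/- Let ℓ be a prime and p ≠ ℓ an odd prime. Then p is H-irregular if and only if p is B-irregular or ord_p(ℓ²) < (p−1)/2. -/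
/-- `H_{2n} = (1 - ℓ^{2n}) B_{2n} / (2n)`. -/
noncomputable def Hnum (ℓ : ℕ) (n : ℕ) : ℚ :=
  (1 - (ℓ : ℚ) ^ (2 * n)) * bernoulli (2 * n) / (2 * n)

/-- An odd prime `p` is `B`-irregular if `ν_p(B_{2k}) ≥ 1` for some
`1 ≤ k ≤ (p-3)/2` (so `3` is `B`-regular). -/
def BIrregular (p : ℕ) : Prop :=
  ∃ k : ℕ, 1 ≤ k ∧ k ≤ (p - 3) / 2 ∧ 1 ≤ padicValRat p (bernoulli (2 * k))

/-- An odd prime `p` is `H`-irregular if `ν_p(H_{2k}) ≥ 1` for some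
`1 ≤ k ≤ (p-3)/2` (so `3` is `H`-regular). -/
noncomputable def HIrregular (ℓ : ℕ) (p : ℕ) : Prop :=
  ∃ k : ℕ, 1 ≤ k ∧ k ≤ (p - 3) / 2 ∧ 1 ≤ padicValRat p (Hnum ℓ k)

/-! For `1 ≤ k ≤ (p - 3) / 2` we have `p ∤ 2k`, so
`ν_p(H_{2k}) = ν_p(1 - ℓ^{2k}) + ν_p(B_{2k})`. The first summand is `≥ 1` exactly when
`ord_p(ℓ²) ∣ k`, and the second is `≥ 0` by von Staudt–Clausen, since every prime in the
correction sum for `B_{2k}` is smaller than `p`. Hence an index witnessing `H`-irregularity but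
not `B`-irregularity satisfies `ord_p(ℓ²) ≤ k`, and conversely `k = ord_p(ℓ²)` witnesses
`H`-irregularity as soon as it is below `(p - 1) / 2`. -/

open Finset

lemma padicValRat_nonneg_of_not_dvd_den {p : ℕ} {q : ℚ} (h : ¬p ∣ q.den) :
    0 ≤ padicValRat p q := by
  rw [padicValRat_def, padicValNat.eq_zero_of_not_dvd h, Nat.cast_zero, sub_zero]
  exact Nat.cast_nonneg _

lemma padicValRat_bernoulli_two_mul_nonneg {p k : ℕ} [Fact p.Prime] (hk : 2 * k + 2 ≤ p) :
    0 ≤ padicValRat p (bernoulli (2 * k)) := by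
  obtain ⟨n, hn⟩ := Bernoulli.vonStaudt_clausen k
  rw [eq_sub_of_add_eq hn.symm]
  refine padicValRat_nonneg_of_not_dvd_den (Rat.padicValuation_le_one_iff.mp ?_)
  refine (Rat.padicValuation p).map_sub_le (Int.padicValuation_le_one p n)
    (Valuation.map_sum_le _ fun q hq => Rat.padicValuation_le_one_iff.mpr ?_)
  obtain ⟨hqp, hq, -⟩ := mem_filter.mp hq
  rw [one_div, Rat.inv_natCast_den, if_neg hq.ne_zero]
  exact fun hpq => (Nat.le_of_dvd hq.pos hpq).not_gt ((mem_range.mp hqp).trans_le hk)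

lemma bernoulli_two_mul_ne_zero {k : ℕ} (hk : k ≠ 0) : bernoulli (2 * k) ≠ 0 := by
  intro h
  have hζ := hasSum_zeta_nat hk
  simp only [h, Rat.cast_zero, mul_zero, zero_div] at hζ
  have := le_hasSum hζ 1 fun j _ => by positivity
  norm_num at this

lemma one_le_padicValInt_one_sub_pow_iff {p : ℕ} [Fact p.Prime] {a : ℤ} {m k : ℕ}
    (h : a ^ (m * k) ≠ 1) :
    1 ≤ padicValInt p (1 - a ^ (m * k)) ↔ orderOf ((a : ZMod p) ^ m) ∣ k := by
  have hdvd := padicValInt_dvd_iff (p := p) 1 (1 - a ^ (m * k))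
  rw [pow_one, or_iff_right (sub_ne_zero.mpr h.symm)] at hdvd
  rw [← hdvd, ← ZMod.intCast_zmod_eq_zero_iff_dvd, orderOf_dvd_iff_pow_eq_one, ← pow_mul]
  push_cast
  rw [sub_eq_zero, eq_comm]

lemma padicValRat_Hnum {ℓ p k : ℕ} [Fact p.Prime] (hℓk : (ℓ : ℤ) ^ (2 * k) ≠ 1)
    (hk : k ≠ 0) (hkp : 2 * k < p) :
    padicValRat p (Hnum ℓ k) =
      padicValInt p (1 - (ℓ : ℤ) ^ (2 * k)) + padicValRat p (bernoulli (2 * k)) := by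
  have hℓk' : ((1 - (ℓ : ℤ) ^ (2 * k) : ℤ) : ℚ) ≠ 0 :=
    Int.cast_ne_zero.mpr (sub_ne_zero.mpr hℓk.symm)
  have hB := bernoulli_two_mul_ne_zero hk
  have h2k : padicValRat p (2 * k : ℚ) = 0 := by
    have h2kp : ¬p ∣ 2 * k := Nat.not_dvd_of_pos_of_lt (by omega) hkp
    rw [show (2 * k : ℚ) = (2 * k : ℕ) by push_cast; rfl, padicValRat.of_nat,
      padicValNat.eq_zero_of_not_dvd h2kp, Nat.cast_zero]
  rw [Hnum, show (1 : ℚ) - ℓ ^ (2 * k) = (1 - (ℓ : ℤ) ^ (2 * k) : ℤ) by push_cast; rfl,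
    padicValRat.div (mul_ne_zero hℓk' hB) (by positivity), padicValRat.mul hℓk' hB, h2k,
    sub_zero, padicValRat.of_int]

theorem HIrregular_iff_general (ℓ p : ℕ) (hℓ : ℓ.Prime) (hp : p.Prime) (hne : p ≠ ℓ) :
    HIrregular ℓ p ↔ BIrregular p ∨ orderOf ((ℓ : ZMod p) ^ 2) < (p - 1) / 2 := by
  have : Fact p.Prime := ⟨hp⟩
  have hℓk {k : ℕ} (hk : 1 ≤ k) : (ℓ : ℤ) ^ (2 * k) ≠ 1 :=
    (one_lt_pow₀ (by exact_mod_cast hℓ.one_lt) (by omega)).ne'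
  have hH {k : ℕ} (hk : 1 ≤ k) (hkp : k ≤ (p - 3) / 2) :
      padicValRat p (Hnum ℓ k) =
        padicValInt p (1 - (ℓ : ℤ) ^ (2 * k)) + padicValRat p (bernoulli (2 * k)) :=
    padicValRat_Hnum (hℓk hk) (by omega) (by omega)
  have hord {k : ℕ} (hk : 1 ≤ k) :
      1 ≤ padicValInt p (1 - (ℓ : ℤ) ^ (2 * k)) ↔ orderOf ((ℓ : ZMod p) ^ 2) ∣ k := by
    simpa using one_le_padicValInt_one_sub_pow_iff (p := p) (hℓk hk)
  constructor
  · rintro ⟨k, hk, hkp, hHk⟩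
    by_cases hB : 1 ≤ padicValRat p (bernoulli (2 * k))
    · exact Or.inl ⟨k, hk, hkp, hB⟩
    · rw [hH hk hkp] at hHk
      have := Nat.le_of_dvd hk ((hord hk).mp (by omega))
      exact Or.inr (by omega)
  · rintro (⟨k, hk, hkp, hB⟩ | hlt)
    · exact ⟨k, hk, hkp, by rw [hH hk hkp]; omega⟩
    · set k := orderOf ((ℓ : ZMod p) ^ 2)
      have hℓp : IsUnit (ℓ : ZMod p) := (ZMod.isUnit_prime_iff_not_dvd hℓ).mpr
        fun h => hne ((Nat.prime_dvd_prime_iff_eq hℓ hp).mp h).symm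
      have hk : 1 ≤ k := (hℓp.pow 2).isOfFinOrder.orderOf_pos
      have hkp : k ≤ (p - 3) / 2 := by omega
      have hℓ_val := (hord hk).mpr dvd_rfl
      have hB := padicValRat_bernoulli_two_mul_nonneg (p := p) (k := k) (by omega)
      exact ⟨k, hk, hkp, by rw [hH hk hkp]; omega⟩

/-- Let `ℓ` be a prime and `p ≠ ℓ` an odd prime. Then `p` is `H`-irregular iff
`p` is `B`-irregular or `ord_p(ℓ²) < (p-1)/2`. -/
theorem HIrregular_iff (ℓ p : ℕ) (hℓ : ℓ.Prime) (hp : p.Prime) (hne : p ≠ ℓ)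
    (hodd : Odd p) :
    HIrregular ℓ p ↔ BIrregular p ∨ orderOf ((ℓ : ZMod p) ^ 2) < (p - 1) / 2 :=
  HIrregular_iff_general ℓ p hℓ hp hne
end

section
/- Let ℓ and p be distinct primes with p odd, and let n be a positive integer such that p − 1 divides 2n. Then ν_p(H_{2n}) = ν_p(ℓ^{p−1} − 1) − 1. Furthermore, ν_p(H⁻_{2n}) equals ν_p(ℓ^{p−1} − 1) − 1 if (p−1) | n; it equals ν_p(ℓ^{(p−1)/2} − 1) − 1 if (p−1) ∤ n and the Legendre symbol (ℓ/p) = 1; and it equals −1 − ν_p(n) if (p−1) ∤ n and (ℓ/p) = −1. Also, ν_p(H⁺_{2n}) equals ν_p(ℓ^{(p−1)/2} + 1) − 1 if (p−1) ∤ n and (ℓ/p) = −1, and equals −1 − ν_p(n) otherwise. -/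
/-- `H⁻_{2n} = (1 - ℓ^n) B_{2n} / (2n)`. -/
noncomputable def HnumMinus (ℓ : ℕ) (n : ℕ) : ℚ :=
  (1 - (ℓ : ℚ) ^ n) * bernoulli (2 * n) / (2 * n)

/-- `H⁺_{2n} = (1 + ℓ^n) B_{2n} / (2n)`. -/
noncomputable def HnumPlus (ℓ : ℕ) (n : ℕ) : ℚ :=
  (1 + (ℓ : ℚ) ^ n) * bernoulli (2 * n) / (2 * n)

/-!
By von Staudt–Clausen, `p ∣ den B_{2n}` exactly once whenever `p - 1 ∣ 2n`, i.e.
`ν_p(B_{2n}) = -1`; since `p` is odd, `ν_p(2n) = ν_p(n)`. So each of the three quantities has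
valuation `ν_p(A) - 1 - ν_p(n)`, where `A` is `1 - ℓ^{2n}`, `1 - ℓ^n` or `1 + ℓ^n`. Writing the
exponent as a multiple of `p - 1` or of `(p - 1)/2` and using Fermat and Euler's criterion,
either `A` is a `p`-adic unit, or the lifting-the-exponent lemma gives `ν_p(A) = ν_p(A₀) + ν_p(n)`
for the corresponding `A₀` with exponent `p - 1` or `(p - 1)/2`.
-/

theorem Nat.half_dvd_of_dvd_two_mul {a n : ℕ} (ha : Even a) (h : a ∣ 2 * n) : a / 2 ∣ n := by
  obtain ⟨b, rfl⟩ := ha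
  rw [← two_mul, mul_dvd_mul_iff_left two_ne_zero] at h
  rwa [← two_mul, Nat.mul_div_cancel_left _ two_pos]

theorem Nat.exists_odd_mul_half_of_dvd_two_mul {a n : ℕ} (ha : Even a) (h : a ∣ 2 * n)
    (hn : ¬ a ∣ n) : ∃ k, Odd k ∧ n = a / 2 * k := by
  obtain ⟨k, hk⟩ := Nat.half_dvd_of_dvd_two_mul ha h
  refine ⟨k, Nat.not_even_iff_odd.1 fun ⟨s, hs⟩ => hn ⟨s, ?_⟩, hk⟩
  obtain ⟨b, rfl⟩ := ha
  rw [hk, hs, ← two_mul, Nat.mul_div_cancel_left _ two_pos]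
  ring

theorem Nat.Prime.not_dvd_two_of_odd {p : ℕ} (hp : p.Prime) (hodd : Odd p) : ¬ p ∣ 2 :=
  fun h => by
    rw [(Nat.prime_dvd_prime_iff_eq hp Nat.prime_two).1 h] at hodd
    exact absurd hodd (by decide)

section

variable {p : ℕ} [Fact p.Prime]

theorem ZMod.two_ne_zero_of_odd (hodd : Odd p) : (2 : ZMod p) ≠ 0 := by
  exact_mod_cast (ZMod.natCast_eq_zero_iff 2 p).not.2 ((Fact.out : p.Prime).not_dvd_two_of_odd hodd)

theorem natCast_pow_half_eq_legendreSym (hodd : Odd p) (ℓ : ℕ) :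
    (ℓ : ZMod p) ^ ((p - 1) / 2) = legendreSym p ℓ := by
  rw [legendreSym.eq_pow, Int.cast_natCast]
  congr 1
  obtain ⟨t, ht⟩ := hodd
  omega

theorem natCast_pow_eq_legendreSym (hodd : Odd p) {ℓ n : ℕ} (hℓp : (ℓ : ZMod p) ≠ 0)
    (hdvd : p - 1 ∣ 2 * n) (hnd : ¬ p - 1 ∣ n) : (ℓ : ZMod p) ^ n = legendreSym p ℓ := by
  obtain ⟨k, ⟨s, rfl⟩, rfl⟩ :=
    Nat.exists_odd_mul_half_of_dvd_two_mul (Nat.Odd.sub_odd hodd odd_one) hdvd hnd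
  have hsq := legendreSym.sq_one p (a := ℓ) (by simpa using hℓp)
  rw [pow_mul, natCast_pow_half_eq_legendreSym hodd, ← Int.cast_pow, pow_succ, pow_mul, hsq,
    one_pow, one_mul]

theorem natCast_pow_eq_one_of_dvd_or_legendreSym_eq_one (hodd : Odd p) {ℓ n : ℕ}
    (hℓp : (ℓ : ZMod p) ≠ 0) (hdvd : p - 1 ∣ 2 * n)
    (h : p - 1 ∣ n ∨ legendreSym p ℓ = 1) : (ℓ : ZMod p) ^ n = 1 := by
  by_cases hpn : p - 1 ∣ n
  · obtain ⟨j, rfl⟩ := hpn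
    rw [pow_mul, ZMod.pow_card_sub_one_eq_one hℓp, one_pow]
  · rw [natCast_pow_eq_legendreSym hodd hℓp hdvd hpn, h.resolve_left hpn, Int.cast_one]

theorem padicValNat_mul_of_not_dvd_left {a b : ℕ} (ha : ¬ p ∣ a) (hb : b ≠ 0) :
    padicValNat p (a * b) = padicValNat p b := by
  rw [padicValNat.mul (by rintro rfl; exact ha (dvd_zero p)) hb,
    padicValNat.eq_zero_of_not_dvd ha, zero_add]

theorem padicValRat_intCast_eq_zero {z : ℤ} (hz : (z : ZMod p) ≠ 0) : padicValRat p z = 0 := by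
  rw [padicValRat.of_int, padicValInt.eq_zero_of_not_dvd]
  · rfl
  · rwa [← ZMod.intCast_zmod_eq_zero_iff_dvd]

theorem padicValRat_pow_sub_one (hodd : Odd p) {y j : ℕ} (hy : 1 < y) (hpy : (y : ZMod p) = 1)
    (hj : j ≠ 0) :
    padicValRat p ((y : ℚ) ^ j - 1) = padicValRat p ((y : ℚ) - 1) + padicValNat p j := by
  have hdvd : p ∣ y - 1 := by
    rw [← ZMod.natCast_eq_zero_iff, Nat.cast_sub hy.le, hpy, Nat.cast_one, sub_self]
  have hndvd : ¬ p ∣ y := by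
    rw [← ZMod.natCast_eq_zero_iff, hpy]; exact one_ne_zero
  have lte := padicValNat.pow_sub_pow (y := 1) hodd hy (by simpa using hdvd) hndvd hj
  rw [one_pow] at lte
  have hcast : ∀ m, 1 ≤ m → ((m - 1 : ℕ) : ℚ) = m - 1 := fun m hm => by
    rw [Nat.cast_sub hm, Nat.cast_one]
  rw [← Nat.cast_pow, ← hcast _ (Nat.one_le_pow _ _ (by omega)), ← hcast _ hy.le,
    padicValRat.of_nat, padicValRat.of_nat, lte, Nat.cast_add]

theorem padicValRat_pow_add_one (hodd : Odd p) {y j : ℕ} (hpy : (y : ZMod p) = -1)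
    (hj : Odd j) :
    padicValRat p ((y : ℚ) ^ j + 1) = padicValRat p ((y : ℚ) + 1) + padicValNat p j := by
  have hdvd : p ∣ y + 1 := by
    rw [← ZMod.natCast_eq_zero_iff, Nat.cast_add, hpy, Nat.cast_one, neg_add_cancel]
  have hndvd : ¬ p ∣ y := by
    rw [← ZMod.natCast_eq_zero_iff, hpy]; exact neg_ne_zero.2 one_ne_zero
  have lte := padicValNat.pow_add_pow (y := 1) hodd (by simpa using hdvd) hndvd hj
  rw [one_pow] at lte
  rw [← Nat.cast_one, ← Nat.cast_pow, ← Nat.cast_add, ← Nat.cast_add, padicValRat.of_nat,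
    padicValRat.of_nat, lte, Nat.cast_add]

theorem padicValRat_pow_sub_one_of_dvd (hodd : Odd p) {x e m : ℕ} (hx : 1 < x)
    (he : (x : ZMod p) ^ e = 1) (hpe : ¬ p ∣ e) (hem : e ∣ m) (hm : m ≠ 0) :
    padicValRat p ((x : ℚ) ^ m - 1) = padicValRat p ((x : ℚ) ^ e - 1) + padicValNat p m := by
  obtain ⟨j, rfl⟩ := hem
  have he0 : e ≠ 0 := by rintro rfl; simp at hm
  have hj0 : j ≠ 0 := by rintro rfl; simp at hm
  have := padicValRat_pow_sub_one hodd (y := x ^ e) (j := j) (Nat.one_lt_pow he0 hx)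
    (by push_cast; exact he) hj0
  simp only [Nat.cast_pow] at this
  rw [pow_mul, this, padicValNat_mul_of_not_dvd_left hpe hj0]

open Finset in
theorem padicNorm_bernoulli_two_mul {k : ℕ} (hk : k ≠ 0) (hdvd : p - 1 ∣ 2 * k) :
    padicNorm p (bernoulli (2 * k)) = p := by
  have hp : p.Prime := Fact.out
  obtain ⟨z, hz⟩ := Bernoulli.vonStaudt_clausen k
  have hmem : p ∈ {q ∈ range (2 * k + 2) | q.Prime ∧ q - 1 ∣ 2 * k} := by
    have := Nat.le_of_dvd (by omega) hdvd
    simp only [mem_filter, mem_range]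
    exact ⟨by omega, hp, hdvd⟩
  rw [← add_sum_erase _ _ hmem] at hz
  set r := ∑ q ∈ {q ∈ range (2 * k + 2) | q.Prime ∧ q - 1 ∣ 2 * k}.erase p, (1 : ℚ) / q
  have hr : padicNorm p r ≤ 1 := by
    refine padicNorm.sum_le' (fun q hq => ?_) zero_le_one
    obtain ⟨hqp, hq⟩ := mem_erase.1 hq
    have hpq : ¬ p ∣ q := fun h =>
      hqp ((Nat.prime_dvd_prime_iff_eq hp (mem_filter.1 hq).2.1).1 h).symm
    rw [padicNorm.div, padicNorm.one, (padicNorm.nat_eq_one_iff q).2 hpq, div_one]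
  have hB : bernoulli (2 * k) = (z - r) + -(1 / p) := by linarith
  have hzr : padicNorm p (z - r) ≤ 1 := padicNorm.sub.trans (max_le (padicNorm.of_int z) hr)
  have hinv : padicNorm p (-(1 / p)) = p := by
    rw [padicNorm.neg, padicNorm.div, padicNorm.one, padicNorm.padicNorm_p_of_prime, one_div,
      inv_inv]
  have hp1 : (1 : ℚ) < p := mod_cast hp.one_lt
  rw [hB, padicNorm.add_eq_max_of_ne (by rw [hinv]; linarith), hinv, max_eq_right (by linarith)]

theorem padicValRat_bernoulli_two_mul {k : ℕ} (hk : k ≠ 0) (hdvd : p - 1 ∣ 2 * k) :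
    padicValRat p (bernoulli (2 * k)) = -1 := by
  have hp : p.Prime := Fact.out
  have h := padicNorm_bernoulli_two_mul hk hdvd
  have hB : bernoulli (2 * k) ≠ 0 := fun h0 => by
    rw [h0, padicNorm.zero] at h; exact hp.ne_zero (mod_cast h.symm)
  rw [padicNorm.eq_zpow_of_nonzero hB] at h
  have := zpow_right_injective₀ (mod_cast hp.pos : (0 : ℚ) < p) (mod_cast hp.one_lt.ne')
    (h.trans (zpow_one _).symm)
  omega

theorem padicValRat_mul_bernoulli_div (hodd : Odd p) {n : ℕ} (hn : n ≠ 0)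
    (hdvd : p - 1 ∣ 2 * n) {a : ℚ} (ha : a ≠ 0) :
    padicValRat p (a * bernoulli (2 * n) / (2 * n)) = padicValRat p a - 1 - padicValNat p n := by
  have hB := padicValRat_bernoulli_two_mul hn hdvd
  have hB0 : bernoulli (2 * n) ≠ 0 := fun h => by rw [h, padicValRat.zero] at hB; omega
  have h2n : padicValRat p (2 * n) = padicValNat p n := by
    rw [show (2 * n : ℚ) = ((2 * n : ℕ) : ℚ) by push_cast; rfl, padicValRat.of_nat,
      padicValNat_mul_of_not_dvd_left ((Fact.out : p.Prime).not_dvd_two_of_odd hodd) hn]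
  rw [padicValRat.div (mul_ne_zero ha hB0) (by positivity), padicValRat.mul ha hB0, hB, h2n]
  ring

theorem padicValRat_intCast_mul_bernoulli_div (hodd : Odd p) {n : ℕ} (hn : n ≠ 0)
    (hdvd : p - 1 ∣ 2 * n) {z : ℤ} (hz : (z : ZMod p) ≠ 0) :
    padicValRat p (z * bernoulli (2 * n) / (2 * n)) = -1 - padicValNat p n := by
  have hz0 : (z : ℚ) ≠ 0 := by rintro h; exact hz (by rw [Int.cast_eq_zero.1 h, Int.cast_zero])
  rw [padicValRat_mul_bernoulli_div hodd hn hdvd hz0, padicValRat_intCast_eq_zero hz]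
  ring

variable {ℓ n : ℕ}

theorem padicValRat_Hnum_s5 (hodd : Odd p) (hℓ : 1 < ℓ) (hℓp : (ℓ : ZMod p) ≠ 0) (hn : n ≠ 0)
    (hdvd : p - 1 ∣ 2 * n) :
    padicValRat p (Hnum ℓ n) = padicValRat p ((ℓ : ℚ) ^ (p - 1) - 1) - 1 := by
  have hp2 : 2 ≤ p := (Fact.out : p.Prime).two_le
  have h1 : (1 - (ℓ : ℚ) ^ (2 * n)) ≠ 0 :=
    sub_ne_zero.2 (one_lt_pow₀ (mod_cast hℓ) (by omega)).ne
  rw [Hnum, padicValRat_mul_bernoulli_div hodd hn hdvd h1, ← neg_sub ((ℓ : ℚ) ^ (2 * n)),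
    padicValRat.neg, padicValRat_pow_sub_one_of_dvd hodd hℓ (ZMod.pow_card_sub_one_eq_one hℓp)
      (Nat.not_dvd_of_pos_of_lt (by omega) (by omega)) hdvd (by omega),
    padicValNat_mul_of_not_dvd_left ((Fact.out : p.Prime).not_dvd_two_of_odd hodd) hn]
  ring

theorem padicValRat_HnumMinus_of_pow_eq_one {e : ℕ} (hodd : Odd p) (hℓ : 1 < ℓ) (hn : n ≠ 0)
    (hdvd : p - 1 ∣ 2 * n) (he : (ℓ : ZMod p) ^ e = 1) (hpe : ¬ p ∣ e) (hen : e ∣ n) :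
    padicValRat p (HnumMinus ℓ n) = padicValRat p ((ℓ : ℚ) ^ e - 1) - 1 := by
  have h1 : (1 - (ℓ : ℚ) ^ n) ≠ 0 := sub_ne_zero.2 (one_lt_pow₀ (mod_cast hℓ) hn).ne
  rw [HnumMinus, padicValRat_mul_bernoulli_div hodd hn hdvd h1, ← neg_sub ((ℓ : ℚ) ^ n),
    padicValRat.neg, padicValRat_pow_sub_one_of_dvd hodd hℓ he hpe hen hn]
  ring

theorem padicValRat_HnumMinus_of_pow_eq_neg_one (hodd : Odd p) (hn : n ≠ 0)
    (hdvd : p - 1 ∣ 2 * n) (h : (ℓ : ZMod p) ^ n = -1) :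
    padicValRat p (HnumMinus ℓ n) = -1 - padicValNat p n := by
  have := padicValRat_intCast_mul_bernoulli_div hodd hn hdvd (z := 1 - ℓ ^ n)
    (by rw [Int.cast_sub, Int.cast_one, Int.cast_pow, Int.cast_natCast, h, sub_neg_eq_add,
      one_add_one_eq_two]; exact ZMod.two_ne_zero_of_odd hodd)
  simpa only [HnumMinus, Int.cast_sub, Int.cast_one, Int.cast_pow, Int.cast_natCast] using this

theorem padicValRat_HnumPlus_of_pow_eq_neg_one {e k : ℕ} (hodd : Odd p) (hn : n ≠ 0)
    (hdvd : p - 1 ∣ 2 * n) (he : (ℓ : ZMod p) ^ e = -1) (hpe : ¬ p ∣ e) (hk : Odd k)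
    (hnk : n = e * k) :
    padicValRat p (HnumPlus ℓ n) = padicValRat p ((ℓ : ℚ) ^ e + 1) - 1 := by
  have h1 : (1 + (ℓ : ℚ) ^ n) ≠ 0 := by positivity
  have lte := padicValRat_pow_add_one hodd (y := ℓ ^ e) (by push_cast; exact he) hk
  simp only [Nat.cast_pow] at lte
  rw [HnumPlus, padicValRat_mul_bernoulli_div hodd hn hdvd h1, add_comm (1 : ℚ), hnk, pow_mul,
    lte, padicValNat_mul_of_not_dvd_left hpe hk.pos.ne']
  ring

theorem padicValRat_HnumPlus_of_pow_eq_one (hodd : Odd p) (hn : n ≠ 0)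
    (hdvd : p - 1 ∣ 2 * n) (h : (ℓ : ZMod p) ^ n = 1) :
    padicValRat p (HnumPlus ℓ n) = -1 - padicValNat p n := by
  have := padicValRat_intCast_mul_bernoulli_div hodd hn hdvd (z := 1 + ℓ ^ n)
    (by rw [Int.cast_add, Int.cast_one, Int.cast_pow, Int.cast_natCast, h, one_add_one_eq_two]
        exact ZMod.two_ne_zero_of_odd hodd)
  simpa only [HnumPlus, Int.cast_add, Int.cast_one, Int.cast_pow, Int.cast_natCast] using this

end

/-- Let `ℓ ≠ p` be primes with `p` odd, and `n ≥ 1` with `p - 1 ∣ 2n`. Then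
`ν_p(H_{2n}) = ν_p(ℓ^{p-1} - 1) - 1`; moreover `ν_p(H⁻_{2n})` equals
`ν_p(ℓ^{p-1} - 1) - 1` if `(p-1) ∣ n`, equals `ν_p(ℓ^{(p-1)/2} - 1) - 1` if
`(p-1) ∤ n` and `(ℓ/p) = 1`, and equals `-1 - ν_p(n)` if `(p-1) ∤ n` and
`(ℓ/p) = -1`; and `ν_p(H⁺_{2n})` equals `ν_p(ℓ^{(p-1)/2} + 1) - 1` if
`(p-1) ∤ n` and `(ℓ/p) = -1`, and equals `-1 - ν_p(n)` otherwise. -/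
theorem padicValRat_H_of_dvd (ℓ p : ℕ) [hp : Fact p.Prime] (hℓ : ℓ.Prime)
    (hne : ℓ ≠ p) (hodd : Odd p) (n : ℕ) (hn : 1 ≤ n) (hdvd : (p - 1) ∣ 2 * n) :
    (padicValRat p (Hnum ℓ n) = padicValRat p ((ℓ : ℚ) ^ (p - 1) - 1) - 1) ∧
    (((p - 1) ∣ n →
        padicValRat p (HnumMinus ℓ n) = padicValRat p ((ℓ : ℚ) ^ (p - 1) - 1) - 1) ∧
      (¬ (p - 1) ∣ n → legendreSym p ℓ = 1 →
        padicValRat p (HnumMinus ℓ n) =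
          padicValRat p ((ℓ : ℚ) ^ ((p - 1) / 2) - 1) - 1) ∧
      (¬ (p - 1) ∣ n → legendreSym p ℓ = -1 →
        padicValRat p (HnumMinus ℓ n) = -1 - (padicValNat p n : ℤ))) ∧
    ((¬ (p - 1) ∣ n → legendreSym p ℓ = -1 →
        padicValRat p (HnumPlus ℓ n) =
          padicValRat p ((ℓ : ℚ) ^ ((p - 1) / 2) + 1) - 1) ∧
      (¬ (¬ (p - 1) ∣ n ∧ legendreSym p ℓ = -1) →
        padicValRat p (HnumPlus ℓ n) = -1 - (padicValNat p n : ℤ))) := by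
  have hp3 : 3 ≤ p := by obtain ⟨t, ht⟩ := hodd; have := hp.out.two_le; omega
  have hℓp : (ℓ : ZMod p) ≠ 0 := by
    rw [Ne, ZMod.natCast_eq_zero_iff]
    exact fun h => hne ((Nat.prime_dvd_prime_iff_eq hp.out hℓ).1 h).symm
  have hn0 : n ≠ 0 := by omega
  have hev : Even (p - 1) := Nat.Odd.sub_odd hodd odd_one
  have hpe : ¬ p ∣ (p - 1) / 2 := Nat.not_dvd_of_pos_of_lt (by omega) (by omega)
  have hhalf := natCast_pow_half_eq_legendreSym hodd ℓ
  refine ⟨padicValRat_Hnum_s5 hodd hℓ.one_lt hℓp hn0 hdvd,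
    ⟨fun hpn => ?_, fun hnd hleg => ?_, fun hnd hleg => ?_⟩, fun hnd hleg => ?_, fun h => ?_⟩
  · exact padicValRat_HnumMinus_of_pow_eq_one hodd hℓ.one_lt hn0 hdvd
      (ZMod.pow_card_sub_one_eq_one hℓp) (Nat.not_dvd_of_pos_of_lt (by omega) (by omega)) hpn
  · exact padicValRat_HnumMinus_of_pow_eq_one hodd hℓ.one_lt hn0 hdvd
      (by rw [hhalf, hleg, Int.cast_one]) hpe (Nat.half_dvd_of_dvd_two_mul hev hdvd)
  · exact padicValRat_HnumMinus_of_pow_eq_neg_one hodd hn0 hdvd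
      (by rw [natCast_pow_eq_legendreSym hodd hℓp hdvd hnd, hleg, Int.cast_neg, Int.cast_one])
  · obtain ⟨k, hk, hnk⟩ := Nat.exists_odd_mul_half_of_dvd_two_mul hev hdvd hnd
    exact padicValRat_HnumPlus_of_pow_eq_neg_one hodd hn0 hdvd
      (by rw [hhalf, hleg, Int.cast_neg, Int.cast_one]) hpe hk hnk
  · refine padicValRat_HnumPlus_of_pow_eq_one hodd hn0 hdvd
      (natCast_pow_eq_one_of_dvd_or_legendreSym_eq_one hodd hℓp hdvd ?_)
    rw [legendreSym.eq_neg_one_iff_not_one p (by simpa using hℓp)] at h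
    tauto
end

section
/- Let ℓ be a prime. An odd prime p ≠ ℓ is H-irregular if and only if p is ℓ-Genocchi irregular. Moreover, if ℓ > 3, then ℓ is ℓ-Genocchi irregular, and ℓ is H-irregular if and only if ℓ is B-irregular. -/
/-- The `ℓ`-Genocchi number `G_{2n} = ℓ(1 - ℓ^{2n})B_{2n}` (an integer). -/
noncomputable def Gnum (ℓ : ℕ) (n : ℕ) : ℚ :=
  (ℓ : ℚ) * (1 - (ℓ : ℚ) ^ (2 * n)) * bernoulli (2 * n)

/-- An odd prime `p` is `ℓ`-Genocchi irregular if `p` divides one of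
`G_2, G_4, …, G_{p-3}`, i.e. `ν_p(G_{2k}) ≥ 1` for some `1 ≤ k ≤ (p-3)/2`. -/
noncomputable def GenocchiIrregular (ℓ : ℕ) (p : ℕ) : Prop :=
  ∃ k : ℕ, 1 ≤ k ∧ k ≤ (p - 3) / 2 ∧ 1 ≤ padicValRat p (Gnum ℓ k)


private lemma pv_nat_zero {p n : ℕ} (h : ¬ p ∣ n) : padicValRat p (n : ℚ) = 0 := by
  rw [padicValRat.of_nat, padicValNat.eq_zero_of_not_dvd h]; simp

private lemma pv_int_zero {p : ℕ} {z : ℤ} (h : ¬ (p : ℤ) ∣ z) : padicValRat p (z : ℚ) = 0 := by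
  rw [padicValRat.of_int, padicValInt.eq_zero_of_not_dvd h]; simp

private lemma u_ne {ℓ k : ℕ} (hℓ : 2 ≤ ℓ) (hk : 1 ≤ k) : (1 - (ℓ : ℚ) ^ (2 * k)) ≠ 0 := by
  have h1 : (1 : ℚ) < (ℓ : ℚ) ^ (2 * k) := by
    apply one_lt_pow₀ (by exact_mod_cast hℓ.trans_lt' one_lt_two) (by omega)
  linarith

private lemma uval_zero {ℓ k : ℕ} (hℓ : ℓ.Prime) (hk : 1 ≤ k) :
    padicValRat ℓ (1 - (ℓ : ℚ) ^ (2 * k)) = 0 := by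
  have e : (1 - (ℓ : ℚ) ^ (2 * k)) = ((1 - (ℓ : ℤ) ^ (2 * k) : ℤ) : ℚ) := by push_cast; ring
  rw [e, pv_int_zero]
  intro h
  have hpow : (ℓ : ℤ) ∣ (ℓ : ℤ) ^ (2 * k) := dvd_pow_self _ (by omega)
  have : (ℓ : ℤ) ∣ 1 := by
    have := dvd_add h hpow
    simpa using this
  have : (ℓ : ℕ) ∣ 1 := by exact_mod_cast this
  exact hℓ.one_lt.ne' (Nat.dvd_one.mp this)

private lemma Hval {p : ℕ} (ℓ k : ℕ) [Fact p.Prime] (hℓ : 2 ≤ ℓ) (hk : 1 ≤ k)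
    (hB : (bernoulli (2 * k) : ℚ) ≠ 0) :
    padicValRat p (Hnum ℓ k) =
      padicValRat p (1 - (ℓ : ℚ) ^ (2 * k)) + padicValRat p (bernoulli (2 * k))
        - padicValRat p ((2 * k : ℕ) : ℚ) := by
  have hu := u_ne hℓ hk
  have h2k : ((2 * k : ℕ) : ℚ) ≠ 0 := by positivity
  have e : Hnum ℓ k = (1 - (ℓ : ℚ) ^ (2 * k)) * bernoulli (2 * k) / ((2 * k : ℕ) : ℚ) := by
    rw [Hnum]; push_cast; ring
  rw [e, padicValRat.div (mul_ne_zero hu hB) h2k, padicValRat.mul hu hB]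

private lemma Gval {p : ℕ} (ℓ k : ℕ) [Fact p.Prime] (hℓ : 2 ≤ ℓ) (hk : 1 ≤ k)
    (hB : (bernoulli (2 * k) : ℚ) ≠ 0) :
    padicValRat p (Gnum ℓ k) =
      padicValRat p ((ℓ : ℕ) : ℚ) + padicValRat p (1 - (ℓ : ℚ) ^ (2 * k))
        + padicValRat p (bernoulli (2 * k)) := by
  have hu := u_ne hℓ hk
  have hℓQ : ((ℓ : ℕ) : ℚ) ≠ 0 := by positivity
  rw [Gnum, padicValRat.mul (mul_ne_zero hℓQ hu) hB, padicValRat.mul hℓQ hu]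

/-- Let `ℓ` be a prime. An odd prime `p ≠ ℓ` is `H`-irregular iff it is
`ℓ`-Genocchi irregular. Moreover, if `ℓ > 3`, then `ℓ` is `ℓ`-Genocchi
irregular, and `ℓ` is `H`-irregular iff `ℓ` is `B`-irregular. -/
theorem HIrregular_iff_GenocchiIrregular (ℓ : ℕ) (hℓ : ℓ.Prime) :
    (∀ p : ℕ, p.Prime → Odd p → p ≠ ℓ →
      (HIrregular ℓ p ↔ GenocchiIrregular ℓ p)) ∧
    (3 < ℓ → GenocchiIrregular ℓ ℓ ∧ (HIrregular ℓ ℓ ↔ BIrregular ℓ)) := by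
  constructor
  · intro p hp hodd hpne
    haveI := Fact.mk hp
    have key : ∀ k, 1 ≤ k → k ≤ (p - 3) / 2 →
        (1 ≤ padicValRat p (Hnum ℓ k) ↔ 1 ≤ padicValRat p (Gnum ℓ k)) := by
      intro k hk1 hk2
      have h2kle : 2 * k ≤ p - 3 := by
        have := (Nat.le_div_iff_mul_le (by norm_num : 0 < 2)).mp hk2; omega
      have h2k : ¬ p ∣ 2 * k := by
        intro h; have := Nat.le_of_dvd (by omega) h; omega
      have hpl : ¬ p ∣ ℓ := fun h => hpne ((Nat.prime_dvd_prime_iff_eq hp hℓ).mp h)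
      by_cases hB : (bernoulli (2 * k) : ℚ) = 0
      · have hH0 : Hnum ℓ k = 0 := by rw [Hnum, hB]; ring
        have hG0 : Gnum ℓ k = 0 := by rw [Gnum, hB]; ring
        rw [hH0, hG0]
      · rw [Hval ℓ k hℓ.two_le hk1 hB, Gval ℓ k hℓ.two_le hk1 hB,
          pv_nat_zero h2k, pv_nat_zero hpl, sub_zero, zero_add]
    constructor
    · rintro ⟨k, h1, h2, h3⟩; exact ⟨k, h1, h2, (key k h1 h2).mp h3⟩
    · rintro ⟨k, h1, h2, h3⟩; exact ⟨k, h1, h2, (key k h1 h2).mpr h3⟩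
  · intro h3
    haveI := Fact.mk hℓ
    have hℓ4 : ℓ ≠ 4 := by intro h; rw [h] at hℓ; norm_num at hℓ
    have hℓ5 : 5 ≤ ℓ := by omega
    constructor
    · -- ℓ is ℓ-Genocchi irregular, witnessed by k = 1
      refine ⟨1, le_rfl, by omega, ?_⟩
      have hb2 : bernoulli (2 * 1) = 1 / 6 := by
        norm_num [bernoulli_eq_bernoulli'_of_ne_one (by norm_num : (2:ℕ) ≠ 1), bernoulli'_two]
      have hBne : (bernoulli (2 * 1) : ℚ) ≠ 0 := by rw [hb2]; norm_num
      have hB0 : padicValRat ℓ (bernoulli (2 * 1)) = 0 := by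
        rw [hb2]
        have e : (1 / 6 : ℚ) = ((1 : ℕ) : ℚ) / ((6 : ℕ) : ℚ) := by norm_num
        have h6 : ¬ ℓ ∣ 6 := by
          intro h; have := Nat.le_of_dvd (by norm_num) h
          interval_cases ℓ <;> revert h hℓ <;> decide
        rw [e, padicValRat.div (by norm_num) (by norm_num), pv_nat_zero h6]
        simp [pv_nat_zero]
      rw [Gval ℓ 1 hℓ.two_le le_rfl hBne, uval_zero hℓ le_rfl,
        padicValRat.self hℓ.one_lt, hB0]
      norm_num
    · -- HIrregular ℓ ℓ ↔ BIrregular ℓ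
      have key : ∀ k, 1 ≤ k → k ≤ (ℓ - 3) / 2 →
          (1 ≤ padicValRat ℓ (Hnum ℓ k) ↔ 1 ≤ padicValRat ℓ (bernoulli (2 * k))) := by
        intro k hk1 hk2
        have h2kle : 2 * k ≤ ℓ - 3 := by
          have := (Nat.le_div_iff_mul_le (by norm_num : 0 < 2)).mp hk2; omega
        have h2k : ¬ ℓ ∣ 2 * k := by
          intro h; have := Nat.le_of_dvd (by omega) h; omega
        by_cases hB : (bernoulli (2 * k) : ℚ) = 0
        · have hH0 : Hnum ℓ k = 0 := by rw [Hnum, hB]; ring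
          rw [hH0, hB]
        · rw [Hval ℓ k hℓ.two_le hk1 hB, uval_zero hℓ hk1, pv_nat_zero h2k,
            zero_add, sub_zero]
      constructor
      · rintro ⟨k, h1, h2, hv⟩; exact ⟨k, h1, h2, (key k h1 h2).mp hv⟩
      · rintro ⟨k, h1, h2, hv⟩; exact ⟨k, h1, h2, (key k h1 h2).mpr hv⟩
end

section
/- Let ℓ be an odd prime and let 1 ≤ a < d be coprime integers. Define δ_{d,a} := A · c(d,a) · R(d,a), where c(d,a) equals: (1/2)(3 + 1/(ℓ²−ℓ−1)) if ℓ ∤ d and 4 ∤ d; 1 + 1/(ℓ²−ℓ−1) if ℓ ∤ d, 4 | d and a ≡ 1 (mod 4); 1 if ℓ | d, 4 ∤ d and (a/ℓ) = 1; 2 if (4 | d and a ≡ 3 (mod 4)) or (ℓ | d and (a/ℓ) = −1); and 0 if 4ℓ | d, (a/ℓ) = 1 and a ≡ 1 (mod 4). Then the following strict upper bounds hold: δ_{d,a} < (1/4)(3 − 2/(ℓ(ℓ−1))) if ℓ ∤ d and 4 ∤ d; δ_{d,a} < 1/2 if ℓ ∤ d, 4 | d and a ≡ 1 (mod 4); δ_{d,a}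 < 1/3 if ℓ = 3, 3 | d, 4 ∤ d and a ≡ 1 (mod 3); δ_{d,a} < 1/2 if ℓ | d, ℓ > 3, 4 ∤ d and (a/ℓ) = 1; δ_{d,a} < 1 if 4 | d and a ≡ 3 (mod 4); δ_{d,a} < 1 if ℓ | d and (a/ℓ) = −1; and δ_{d,a} = 0 in the remaining case (4ℓ | d, (a/ℓ) = 1, a ≡ 1 (mod 4)). Moreover, each of these upper bounds is sharp: for each of the six cases and every ε > 0 there exist coprime integers 1 ≤ a < d in that case with δ_{d,a} greater than the stated bound minus ε. -/
open scoped BigOperators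

/-- The Artin constant `A = ∏_p (1 - 1/(p(p-1)))`, the product over all primes. -/
noncomputable def artinConstant : ℝ :=
  ∏' p : Nat.Primes, (1 - 1 / (((p : ℕ) : ℝ) * (((p : ℕ) : ℝ) - 1)))

/-- `R(d,a) = ∏_{p | gcd(a-1,d)} (1 - 1/p) ⬝ ∏_{p | d} (1 + 1/(p²-p-1))`,
products over primes. -/
noncomputable def Rda (d a : ℕ) : ℝ :=
  (∏ p ∈ (Nat.gcd (a - 1) d).primeFactors, (1 - 1 / (p : ℝ))) *
    ∏ p ∈ d.primeFactors, (1 + 1 / ((p : ℝ) ^ 2 - (p : ℝ) - 1))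

/-- The factor `c(d,a)` from Theorem `thm-ap`. `(·/·)` is the Jacobi symbol. -/
noncomputable def cGen (ℓ d a : ℕ) : ℝ :=
  if ¬ ℓ ∣ d ∧ ¬ 4 ∣ d then (3 + 1 / ((ℓ : ℝ) ^ 2 - (ℓ : ℝ) - 1)) / 2
  else if ¬ ℓ ∣ d ∧ 4 ∣ d ∧ a % 4 = 1 then 1 + 1 / ((ℓ : ℝ) ^ 2 - (ℓ : ℝ) - 1)
  else if ℓ ∣ d ∧ ¬ 4 ∣ d ∧ jacobiSym (a : ℤ) ℓ = 1 then 1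
  else if (4 ∣ d ∧ a % 4 = 3) ∨ (ℓ ∣ d ∧ jacobiSym (a : ℤ) ℓ = -1) then 2
  else 0

/-- `δ_{d,a} = A·c(d,a)·R(d,a)`. -/
noncomputable def deltaDA (ℓ d a : ℕ) : ℝ := artinConstant * cGen ℓ d a * Rda d a


/-!
Write `f(p) = 1 - 1/(p(p-1))` for the Euler factor of `A` and
`G(a,d) = ∏_{p ∣ gcd(a-1,d)} (1 - 1/p)`, so that `A·R(d,a) = G(a,d) · A / ∏_{p ∣ d} f(p)`, and
`A / ∏_{p ∣ d} f(p) = ∏_{p ∤ d} f(p)` is strictly smaller than the product of `f` over any finite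
set of primes not dividing `d`. The prime `2` always costs a factor `1/2`: through `G` if `2 ∣ d`
(then `a` is odd) and through `f(2) = 1/2` otherwise. With the value of `c(d,a)` in each case this
gives the upper bounds.

For sharpness take `d = m·n`, where `m ∈ {1, 4, 6, 2ℓ}` fixes the case and `n` is the product of
all primes of a large finite set except those of `m` and those deliberately kept out of `d`, and
choose `a` by the Chinese remainder theorem with `a ≡ 2 (mod n)`, so that no prime of `n` divides
`a - 1`. As the set grows, `A / ∏_{p ∣ d} f(p)` tends to the product of `f` over the primes kept
out of `d`, and `δ_{d,a}` tends to the bound.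
-/

open Finset Filter

noncomputable def artinFactor (n : ℕ) : ℝ := 1 - 1 / ((n : ℝ) * ((n : ℝ) - 1))

section EulerFactor

variable {n : ℕ}

lemma one_lt_natCast_mul_sub_one (hn : 2 ≤ n) : 1 < (n : ℝ) * ((n : ℝ) - 1) := by
  have : (2 : ℝ) ≤ n := by exact_mod_cast hn
  nlinarith

lemma artinFactor_pos (hn : 2 ≤ n) : 0 < artinFactor n := by
  have h := one_lt_natCast_mul_sub_one hn
  rw [artinFactor, sub_pos, div_lt_one (by linarith)]
  exact h

lemma artinFactor_lt_one (hn : 2 ≤ n) : artinFactor n < 1 := by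
  have h := one_lt_natCast_mul_sub_one hn
  rw [artinFactor, sub_lt_self_iff]
  positivity

lemma artinFactor_two : artinFactor 2 = 1 / 2 := by norm_num [artinFactor]

lemma inv_artinFactor (hn : 2 ≤ n) :
    (artinFactor n)⁻¹ = 1 + 1 / ((n : ℝ) ^ 2 - (n : ℝ) - 1) := by
  have h := one_lt_natCast_mul_sub_one hn
  rw [artinFactor, show (n : ℝ) ^ 2 - n - 1 = n * (n - 1) - 1 by ring]
  generalize (n : ℝ) * (n - 1) = u at h ⊢
  have : u - 1 ≠ 0 := by linarith
  field_simp
  ring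

lemma prod_artinFactor_pos {s : Finset ℕ} (hs : ∀ p ∈ s, p.Prime) :
    0 < ∏ p ∈ s, artinFactor p :=
  prod_pos fun p hp ↦ artinFactor_pos (hs p hp).two_le

lemma prod_one_add_eq_inv_prod_artinFactor (d : ℕ) :
    ∏ p ∈ d.primeFactors, (1 + 1 / ((p : ℝ) ^ 2 - p - 1)) =
      (∏ p ∈ d.primeFactors, artinFactor p)⁻¹ := by
  rw [← prod_inv_distrib]
  exact prod_congr rfl fun p hp ↦ (inv_artinFactor (Nat.prime_of_mem_primeFactors hp).two_le).symm

end EulerFactor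

section ArtinConstant

lemma summable_artinFactor_sub_one : Summable fun p : Nat.Primes ↦ artinFactor p - 1 := by
  refine .of_norm_bounded
    (((Real.summable_one_div_nat_pow.mpr one_lt_two).mul_left 2).subtype Nat.Prime) fun p ↦ ?_
  have h : (2 : ℝ) ≤ (p : ℕ) := by exact_mod_cast p.2.two_le
  have h1 := one_lt_natCast_mul_sub_one p.2.two_le
  rw [artinFactor, sub_sub_cancel_left, norm_neg, Real.norm_of_nonneg (by positivity)]
  show 1 / (((p : ℕ) : ℝ) * (((p : ℕ) : ℝ) - 1)) ≤ 2 * (1 / ((p : ℕ) : ℝ) ^ 2)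
  rw [div_le_iff₀ (by linarith), mul_one_div, div_mul_eq_mul_div, le_div_iff₀ (by positivity)]
  nlinarith

lemma hasProd_artinFactor : HasProd (fun p : Nat.Primes ↦ artinFactor p) artinConstant := by
  have h := Real.multipliable_one_add_of_summable summable_artinFactor_sub_one
  simp only [add_sub_cancel] at h
  exact h.hasProd

lemma artinConstant_pos : 0 < artinConstant := by
  have hlog := Real.summable_log_one_add_of_summable summable_artinFactor_sub_one
  simp only [add_sub_cancel] at hlog
  rw [hasProd_artinFactor.unique
    (Real.hasProd_of_hasSum_log (fun p ↦ artinFactor_pos p.2.two_le) hlog.hasSum)]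
  exact Real.exp_pos _

lemma artinConstant_le_prod {s : Finset ℕ} (hs : ∀ p ∈ s, p.Prime) :
    artinConstant ≤ ∏ p ∈ s, artinFactor p :=
  ((prod_anti_set_of_le_one (fun p : Nat.Primes ↦ (artinFactor_pos p.2.two_le).le)
    (fun p ↦ (artinFactor_lt_one p.2.two_le).le)).le_of_tendsto hasProd_artinFactor
      (s.subtype Nat.Prime)).trans_eq (prod_subtype_of_mem artinFactor hs)

lemma artinConstant_lt_prod {s : Finset ℕ} (hs : ∀ p ∈ s, p.Prime) :
    artinConstant < ∏ p ∈ s, artinFactor p := by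
  obtain ⟨q, hq, hqs⟩ := Nat.infinite_setOfPred_prime.exists_notMem_finset s
  calc artinConstant ≤ ∏ p ∈ insert q s, artinFactor p :=
        artinConstant_le_prod ((forall_mem_insert _ _ _).mpr ⟨hq, hs⟩)
    _ = artinFactor q * ∏ p ∈ s, artinFactor p := prod_insert hqs
    _ < ∏ p ∈ s, artinFactor p :=
        mul_lt_of_lt_one_left (prod_artinFactor_pos hs) (artinFactor_lt_one hq.two_le)

lemma exists_superset_prod_artinFactor_lt {m : Finset ℕ} (hm : ∀ p ∈ m, p.Prime) {x : ℝ}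
    (hx : artinConstant < x) :
    ∃ s : Finset ℕ, m ⊆ s ∧ (∀ p ∈ s, p.Prime) ∧ ∏ p ∈ s, artinFactor p < x := by
  obtain ⟨S, hS, hmS⟩ := ((hasProd_artinFactor.eventually (gt_mem_nhds hx)).and
    (eventually_ge_atTop (m.subtype Nat.Prime))).exists
  refine ⟨S.image (fun p : Nat.Primes ↦ (p : ℕ)),
    fun p hp ↦ mem_image.mpr ⟨⟨p, hm p hp⟩, hmS (mem_subtype.mpr hp), rfl⟩,
    fun p hp ↦ ?_, ?_⟩
  · obtain ⟨q, -, rfl⟩ := mem_image.mp hp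
    exact q.2
  · rwa [prod_image fun p _ q _ ↦ (Nat.Primes.coe_nat_inj p q).mp]

lemma artinConstant_div_prod_lt {d : ℕ} {Q : Finset ℕ} (hQ : ∀ q ∈ Q, q.Prime ∧ ¬ q ∣ d) :
    artinConstant / ∏ p ∈ d.primeFactors, artinFactor p < ∏ q ∈ Q, artinFactor q := by
  have hdisj : Disjoint Q d.primeFactors := disjoint_left.mpr fun q hq hqd ↦
    (hQ q hq).2 (Nat.dvd_of_mem_primeFactors hqd)
  rw [div_lt_iff₀ (prod_artinFactor_pos fun p ↦ Nat.prime_of_mem_primeFactors),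
    ← prod_union hdisj]
  refine artinConstant_lt_prod fun p hp ↦ ?_
  rcases mem_union.mp hp with hp | hp
  · exact (hQ p hp).1
  · exact Nat.prime_of_mem_primeFactors hp

end ArtinConstant

section UpperBound

lemma prod_one_sub_one_div_antitone :
    Antitone fun s : Finset ℕ ↦ ∏ p ∈ s, (1 - 1 / (p : ℝ)) := by
  refine prod_anti_set_of_le_one (fun p ↦ ?_) (fun p ↦ sub_le_self _ (by positivity))
  rcases p.eq_zero_or_pos with rfl | hp
  · simp
  · rw [sub_nonneg, div_le_one (by positivity)]
    exact_mod_cast hp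

lemma one_sub_one_div_two : (1 : ℝ) - 1 / (2 : ℕ) = 1 / 2 := by norm_num

lemma prod_one_sub_one_div_pos {s : Finset ℕ} (hs : ∀ p ∈ s, 1 < p) :
    0 < ∏ p ∈ s, (1 - 1 / (p : ℝ)) :=
  prod_pos fun p hp ↦ by
    rw [sub_pos, div_lt_one (by have := hs p hp; positivity)]
    exact_mod_cast hs p hp

lemma artinConstant_mul_Rda (d a : ℕ) :
    artinConstant * Rda d a = (∏ p ∈ (Nat.gcd (a - 1) d).primeFactors, (1 - 1 / (p : ℝ))) *
      (artinConstant / ∏ p ∈ d.primeFactors, artinFactor p) := by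
  rw [Rda, prod_one_add_eq_inv_prod_artinFactor, div_eq_mul_inv]
  ring

lemma artinConstant_mul_Rda_lt {a d : ℕ} (hd : d ≠ 0) (had : a.Coprime d) {P Q : Finset ℕ}
    (hP : P ⊆ (Nat.gcd (a - 1) d).primeFactors) (hP2 : 2 ∉ P)
    (hQ : ∀ q ∈ Q, q.Prime ∧ ¬ q ∣ d) (hQ2 : 2 ∉ Q) :
    artinConstant * Rda d a < 1 / 2 * (∏ p ∈ P, (1 - 1 / (p : ℝ))) * ∏ q ∈ Q, artinFactor q := by
  have hG := prod_one_sub_one_div_antitone hP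
  have hP0 := prod_one_sub_one_div_pos fun p hp ↦ (Nat.prime_of_mem_primeFactors (hP hp)).one_lt
  have hA : 0 ≤ artinConstant / ∏ p ∈ d.primeFactors, artinFactor p :=
    div_nonneg artinConstant_pos.le (prod_artinFactor_pos fun p ↦ Nat.prime_of_mem_primeFactors).le
  rw [artinConstant_mul_Rda]
  by_cases h2 : 2 ∣ d
  · have h2a : 2 ∣ a - 1 := by
      have := Nat.odd_iff.mp (Nat.coprime_two_right.mp (had.coprime_dvd_right h2))
      omega
    have h2g : 2 ∈ (Nat.gcd (a - 1) d).primeFactors := Nat.mem_primeFactors.mpr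
      ⟨Nat.prime_two, Nat.dvd_gcd h2a h2, Nat.gcd_ne_zero_right hd⟩
    have hG2 : ∏ p ∈ (Nat.gcd (a - 1) d).primeFactors, (1 - 1 / (p : ℝ)) ≤
        ∏ p ∈ insert 2 P, (1 - 1 / (p : ℝ)) :=
      prod_one_sub_one_div_antitone (insert_subset h2g hP)
    rw [prod_insert hP2, one_sub_one_div_two] at hG2
    exact mul_lt_mul' hG2 (artinConstant_div_prod_lt hQ) hA (by positivity)
  · have hQ' := artinConstant_div_prod_lt (d := d) (Q := insert 2 Q)
      ((forall_mem_insert _ _ _).mpr ⟨⟨Nat.prime_two, h2⟩, hQ⟩)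
    rw [prod_insert hQ2, artinFactor_two] at hQ'
    calc _ < (∏ p ∈ P, (1 - 1 / (p : ℝ))) * (1 / 2 * ∏ q ∈ Q, artinFactor q) :=
          mul_lt_mul' hG hQ' hA hP0
      _ = _ := by ring

end UpperBound

section CaseFactor

variable {ℓ d a : ℕ}

lemma cGen_of_not_dvd_of_not_four_dvd (hℓ : ¬ ℓ ∣ d) (h4 : ¬ 4 ∣ d) :
    cGen ℓ d a = (3 + 1 / ((ℓ : ℝ) ^ 2 - (ℓ : ℝ) - 1)) / 2 := by
  simp [cGen, hℓ, h4]

lemma cGen_of_not_dvd_of_four_dvd (hℓ : ¬ ℓ ∣ d) (h4 : 4 ∣ d) (ha : a % 4 = 1) :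
    cGen ℓ d a = 1 + 1 / ((ℓ : ℝ) ^ 2 - (ℓ : ℝ) - 1) := by
  simp [cGen, hℓ, h4, ha]

lemma cGen_of_dvd_of_not_four_dvd (hℓ : ℓ ∣ d) (h4 : ¬ 4 ∣ d) (ha : jacobiSym a ℓ = 1) :
    cGen ℓ d a = 1 := by
  simp [cGen, hℓ, h4, ha]

lemma cGen_eq_two (h : (4 ∣ d ∧ a % 4 = 3) ∨ (ℓ ∣ d ∧ jacobiSym a ℓ = -1)) :
    cGen ℓ d a = 2 := by
  rcases h with ⟨h4, ha⟩ | ⟨hℓ, ha⟩ <;> simp [cGen, *]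

lemma cGen_of_four_mul_dvd (h : 4 * ℓ ∣ d) (hj : jacobiSym a ℓ = 1) (ha : a % 4 = 1) :
    cGen ℓ d a = 0 := by
  have hℓ : ℓ ∣ d := (Dvd.intro_left 4 rfl).trans h
  have h4 : 4 ∣ d := (Dvd.intro ℓ rfl).trans h
  simp [cGen, hℓ, h4, hj, ha]

lemma three_add_div_pos (hℓ : 2 ≤ ℓ) : 0 < (3 + 1 / ((ℓ : ℝ) ^ 2 - (ℓ : ℝ) - 1)) / 2 := by
  have : 0 < (ℓ : ℝ) ^ 2 - ℓ - 1 := by nlinarith [one_lt_natCast_mul_sub_one hℓ]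
  positivity

lemma three_add_div_mul_half_artinFactor (hℓ : 2 ≤ ℓ) :
    (3 + 1 / ((ℓ : ℝ) ^ 2 - (ℓ : ℝ) - 1)) / 2 * (1 / 2 * artinFactor ℓ) =
      (3 - 2 / ((ℓ : ℝ) * ((ℓ : ℝ) - 1))) / 4 := by
  have h := one_lt_natCast_mul_sub_one hℓ
  rw [artinFactor, show (ℓ : ℝ) ^ 2 - ℓ - 1 = ℓ * (ℓ - 1) - 1 by ring]
  generalize (ℓ : ℝ) * (ℓ - 1) = u at h ⊢
  have : u - 1 ≠ 0 := by linarith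
  field_simp
  ring

end CaseFactor

lemma jacobiSym_natCast_congr {a b ℓ : ℕ} (h : a ≡ b [MOD ℓ]) :
    jacobiSym a ℓ = jacobiSym b ℓ :=
  jacobiSym.mod_left' (by rw [← Int.natCast_mod, ← Int.natCast_mod, h])

lemma jacobiSym_three_of_mod_three_eq_one {a : ℕ} (ha : a % 3 = 1) : jacobiSym a 3 = 1 := by
  rw [jacobiSym_natCast_congr (show a ≡ 1 [MOD 3] from ha), Nat.cast_one, jacobiSym.one_left]

lemma deltaDA_eq_cGen_mul (ℓ d a : ℕ) :
    deltaDA ℓ d a = cGen ℓ d a * (artinConstant * Rda d a) := by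
  rw [deltaDA]
  ring

theorem deltaDA_upper_bounds {ℓ : ℕ} (hℓ : ℓ.Prime) (hℓ2 : ℓ ≠ 2) {a d : ℕ} (hd : d ≠ 0)
    (hcop : a.Coprime d) :
    (¬ ℓ ∣ d → ¬ 4 ∣ d → deltaDA ℓ d a < (3 - 2 / ((ℓ : ℝ) * ((ℓ : ℝ) - 1))) / 4) ∧
      (¬ ℓ ∣ d → 4 ∣ d → a % 4 = 1 → deltaDA ℓ d a < 1 / 2) ∧
      (ℓ = 3 → 3 ∣ d → ¬ 4 ∣ d → a % 3 = 1 → deltaDA ℓ d a < 1 / 3) ∧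
      (ℓ ∣ d → 3 < ℓ → ¬ 4 ∣ d → jacobiSym (a : ℤ) ℓ = 1 → deltaDA ℓ d a < 1 / 2) ∧
      (4 ∣ d → a % 4 = 3 → deltaDA ℓ d a < 1) ∧
      (ℓ ∣ d → jacobiSym (a : ℤ) ℓ = -1 → deltaDA ℓ d a < 1) ∧
      (4 * ℓ ∣ d → jacobiSym (a : ℤ) ℓ = 1 → a % 4 = 1 → deltaDA ℓ d a = 0) := by
  have hfℓ := artinFactor_pos hℓ.two_le
  have hhalf : artinConstant * Rda d a < 1 / 2 := by
    simpa using artinConstant_mul_Rda_lt hd hcop (P := ∅) (Q := ∅) (by simp) (by simp) (by simp)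
      (by simp)
  have hℓhalf (hℓd : ¬ ℓ ∣ d) : artinConstant * Rda d a < 1 / 2 * artinFactor ℓ := by
    simpa using artinConstant_mul_Rda_lt hd hcop (P := ∅) (Q := {ℓ}) (by simp) (by simp)
      (by simpa using ⟨hℓ, hℓd⟩) (by simpa using hℓ2.symm)
  refine ⟨fun hℓd h4 ↦ ?_, fun hℓd h4 ha ↦ ?_, fun hℓ3 h3 h4 ha ↦ ?_, fun hℓd _ h4 hj ↦ ?_,
    fun h4 ha ↦ ?_, fun hℓd hj ↦ ?_, fun h hj ha ↦ ?_⟩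
  · rw [deltaDA_eq_cGen_mul, cGen_of_not_dvd_of_not_four_dvd hℓd h4,
      ← three_add_div_mul_half_artinFactor hℓ.two_le]
    exact mul_lt_mul_of_pos_left (hℓhalf hℓd) (three_add_div_pos hℓ.two_le)
  · rw [deltaDA_eq_cGen_mul, cGen_of_not_dvd_of_four_dvd hℓd h4 ha, ← inv_artinFactor hℓ.two_le]
    calc _ < (artinFactor ℓ)⁻¹ * (1 / 2 * artinFactor ℓ) :=
          mul_lt_mul_of_pos_left (hℓhalf hℓd) (inv_pos.mpr hfℓ)
      _ = 1 / 2 := by field_simp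
  · subst hℓ3
    have h3a : 3 ∈ (Nat.gcd (a - 1) d).primeFactors := Nat.mem_primeFactors.mpr
      ⟨Nat.prime_three, Nat.dvd_gcd (by omega) h3, Nat.gcd_ne_zero_right hd⟩
    have := artinConstant_mul_Rda_lt hd hcop (P := {3}) (Q := ∅) (by simpa using h3a) (by simp)
      (by simp) (by simp)
    rw [deltaDA_eq_cGen_mul,
      cGen_of_dvd_of_not_four_dvd h3 h4 (jacobiSym_three_of_mod_three_eq_one ha), one_mul]
    norm_num at this ⊢
    linarith
  · rw [deltaDA_eq_cGen_mul, cGen_of_dvd_of_not_four_dvd hℓd h4 hj, one_mul]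
    exact hhalf
  · rw [deltaDA_eq_cGen_mul, cGen_eq_two (.inl ⟨h4, ha⟩)]
    linarith
  · rw [deltaDA_eq_cGen_mul, cGen_eq_two (.inr ⟨hℓd, hj⟩)]
    linarith
  · rw [deltaDA_eq_cGen_mul, cGen_of_four_mul_dvd h hj ha, zero_mul]

section Construction

lemma exists_modEq_modEq_two {m n : ℕ} (r : ℕ) (hmn : m.Coprime n) (hn : 3 ≤ n) :
    ∃ a, 2 ≤ a ∧ a < m * n ∧ a ≡ r [MOD m] ∧ a ≡ 2 [MOD n] := by
  have hm : m ≠ 0 := by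
    rintro rfl
    rw [Nat.coprime_zero_left] at hmn
    omega
  obtain ⟨k, hkm, hkn⟩ := Nat.chineseRemainder hmn r 2
  have hk := Nat.mod_modEq k (m * n)
  have ha : k % (m * n) ≡ 2 [MOD n] := (hk.of_mul_left m).trans hkn
  refine ⟨k % (m * n), ?_, Nat.mod_lt _ (by positivity), (hk.of_mul_right n).trans hkm, ha⟩
  have := Nat.mod_le (k % (m * n)) n
  rwa [ha, Nat.mod_eq_of_lt (by omega : 2 < n)] at this

/-- No prime factor of `n` divides `a - 1`, because `a ≡ 2 (mod n)`. -/
lemma exists_coprime_modEq_gcd_sub_one_eq {m n r : ℕ} (hr : 1 ≤ r) (hrm : r.Coprime m)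
    (hmn : m.Coprime n) (hn : Odd n) (hn3 : 3 ≤ n) :
    ∃ a, 1 ≤ a ∧ a < m * n ∧ a.Coprime (m * n) ∧ a ≡ r [MOD m] ∧
      Nat.gcd (a - 1) (m * n) = Nat.gcd (r - 1) m := by
  obtain ⟨a, ha2, ham, har, han⟩ := exists_modEq_modEq_two r hmn hn3
  have ha1 : a - 1 ≡ 1 [MOD n] :=
    Nat.ModEq.add_right_cancel' 1 (by rwa [Nat.sub_add_cancel (by omega)])
  refine ⟨a, by omega, ham, ?_, har, ?_⟩
  · refine Nat.Coprime.mul_right ?_ ?_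
    · rw [Nat.Coprime, har.gcd_eq]
      exact hrm
    · rw [Nat.Coprime, han.gcd_eq]
      exact Nat.coprime_two_left.mpr hn
  · rw [Nat.Coprime.gcd_mul_right_cancel_right m ?_, (Nat.ModEq.add_right_cancel' 1 ?_).gcd_eq]
    · rwa [Nat.sub_add_cancel (by omega), Nat.sub_add_cancel hr]
    · rw [Nat.Coprime, Nat.gcd_comm, ha1.gcd_eq, Nat.gcd_one_left]

lemma exists_odd_prod_artinFactor_lt {m : ℕ} (hm : m ≠ 0) {E : Finset ℕ}
    (hE : ∀ p ∈ E, p.Prime ∧ ¬ p ∣ m) (h2 : 2 ∣ m ∨ 2 ∈ E) {x : ℝ} (hx : artinConstant < x) :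
    ∃ n, 3 ≤ n ∧ Odd n ∧ m.Coprime n ∧ (∀ p ∈ E, ¬ p ∣ n) ∧
      (∏ p ∈ E, artinFactor p) * ∏ p ∈ (m * n).primeFactors, artinFactor p < x := by
  set M := m.primeFactors ∪ E
  have hMp : ∀ p ∈ M, p.Prime := fun p hp ↦
    (mem_union.mp hp).elim Nat.prime_of_mem_primeFactors fun hp ↦ (hE p hp).1
  have h2M : 2 ∈ M := h2.elim
    (fun h ↦ mem_union_left _ (Nat.mem_primeFactors.mpr ⟨Nat.prime_two, h, hm⟩))
    (mem_union_right _)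
  obtain ⟨q, hq, hqM⟩ := Nat.infinite_setOfPred_prime.exists_notMem_finset M
  obtain ⟨s, hMs, hsp, hs⟩ := exists_superset_prod_artinFactor_lt (m := insert q M)
    ((forall_mem_insert _ _ _).mpr ⟨hq, hMp⟩) hx
  set t := s \ M
  have htp : ∀ p ∈ t, p.Prime := fun p hp ↦ hsp p (mem_sdiff.mp hp).1
  have hqt : q ∈ t := mem_sdiff.mpr ⟨hMs (mem_insert_self q M), hqM⟩
  have hn0 : ∏ p ∈ t, p ≠ 0 := prod_ne_zero_iff.mpr fun p hp ↦ (htp p hp).ne_zero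
  have hpf : (∏ p ∈ t, p).primeFactors = t := Nat.primeFactors_prod htp
  have hdvd {p : ℕ} (hp : p.Prime) (hpt : p ∉ t) : ¬ p ∣ ∏ p ∈ t, p := fun h ↦
    hpt (hpf ▸ Nat.mem_primeFactors.mpr ⟨hp, h, hn0⟩)
  have hmt : Disjoint m.primeFactors t := disjoint_sdiff.mono_left subset_union_left
  refine ⟨∏ p ∈ t, p, ?_, ?_, ?_,
    fun p hp ↦ hdvd (hE p hp).1 fun h ↦ (mem_sdiff.mp h).2 (mem_union_right _ hp), ?_⟩
  · have := Nat.le_of_dvd (Nat.pos_of_ne_zero hn0) (dvd_prod_of_mem _ hqt)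
    have := hq.two_le
    have : q ≠ 2 := fun h ↦ hqM (h ▸ h2M)
    omega
  · exact Nat.odd_iff.mpr
      (Nat.two_dvd_ne_zero.mp (hdvd Nat.prime_two fun h ↦ (mem_sdiff.mp h).2 h2M))
  · exact Nat.Coprime.prod_right fun p hp ↦ ((htp p hp).coprime_iff_not_dvd.mpr fun h ↦
      disjoint_left.mp hmt (Nat.mem_primeFactors.mpr ⟨htp p hp, h, hm⟩) hp).symm
  · have hEm : Disjoint m.primeFactors E := disjoint_right.mpr fun p hp hpm ↦
      (hE p hp).2 (Nat.dvd_of_mem_primeFactors hpm)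
    have hs_eq : ∏ p ∈ s, artinFactor p = (∏ p ∈ m.primeFactors, artinFactor p) *
        (∏ p ∈ E, artinFactor p) * ∏ p ∈ t, artinFactor p := by
      rw [← prod_union hEm, ← prod_union disjoint_sdiff,
        union_sdiff_of_subset ((subset_insert q M).trans hMs)]
    rw [Nat.primeFactors_mul hm hn0, hpf, prod_union hmt]
    calc _ = ∏ p ∈ s, artinFactor p := by rw [hs_eq]; ring
      _ < x := hs

lemma exists_artinConstant_mul_Rda_gt {m r : ℕ} (hm : m ≠ 0) (hr : 1 ≤ r) (hrm : r.Coprime m)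
    {E : Finset ℕ} (hE : ∀ p ∈ E, p.Prime ∧ ¬ p ∣ m) (h2 : 2 ∣ m ∨ 2 ∈ E) {ε : ℝ} (hε : 0 < ε) :
    ∃ a n : ℕ, 1 ≤ a ∧ a < m * n ∧ a.Coprime (m * n) ∧ Odd n ∧ (∀ p ∈ E, ¬ p ∣ n) ∧
      a ≡ r [MOD m] ∧
      (1 - ε) * ((∏ p ∈ (Nat.gcd (r - 1) m).primeFactors, (1 - 1 / (p : ℝ))) *
        ∏ p ∈ E, artinFactor p) < artinConstant * Rda (m * n) a := by
  have hA := artinConstant_pos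
  obtain ⟨n, hn3, hn, hmn, hEn, hprod⟩ := exists_odd_prod_artinFactor_lt hm hE h2
    (x := artinConstant * (1 + ε)) (by nlinarith)
  obtain ⟨a, ha, ham, hcop, har, hgcd⟩ := exists_coprime_modEq_gcd_sub_one_eq hr hrm hmn hn hn3
  refine ⟨a, n, ha, ham, hcop, hn, hEn, har, ?_⟩
  have hG := prod_one_sub_one_div_pos (s := (Nat.gcd (r - 1) m).primeFactors)
    fun p hp ↦ (Nat.prime_of_mem_primeFactors hp).one_lt
  have hE' := prod_artinFactor_pos fun p hp ↦ (hE p hp).1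
  have hP := prod_artinFactor_pos (s := (m * n).primeFactors)
    fun p hp ↦ Nat.prime_of_mem_primeFactors hp
  have key : (1 - ε) * ∏ p ∈ E, artinFactor p <
      artinConstant / ∏ p ∈ (m * n).primeFactors, artinFactor p := by
    rw [lt_div_iff₀ hP]
    rcases le_or_gt 1 ε with h | h
    · nlinarith [mul_pos hE' hP]
    · nlinarith [mul_lt_mul_of_pos_left hprod (sub_pos.mpr h), mul_pos hA (mul_pos hε hε)]
  rw [artinConstant_mul_Rda, hgcd]
  nlinarith [mul_lt_mul_of_pos_left key hG]

end Construction

section Sharpness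

lemma sub_lt_mul_of_one_sub_mul_lt {c x y ε : ℝ} (hc : 0 ≤ c) (hcx : c * x ≤ 1) (hε : 0 < ε)
    (h : (1 - ε) * x < y) : c * x - ε < c * y := by
  rcases hc.eq_or_lt with rfl | hc
  · simpa using hε
  · nlinarith [mul_lt_mul_of_pos_left h hc, mul_le_mul_of_nonneg_left hcx hε.le]

lemma exists_odd_jacobiSym_eq_neg_one {ℓ : ℕ} (hℓ : ℓ.Prime) (hℓ2 : ℓ ≠ 2) :
    ∃ r : ℕ, Odd r ∧ jacobiSym r ℓ = -1 := by
  have := Fact.mk hℓ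
  obtain ⟨x, hx⟩ :=
    FiniteField.exists_nonsquare (by rwa [ZMod.ringChar_zmod_n] : ringChar (ZMod ℓ) ≠ 2)
  have hJ : jacobiSym x.val ℓ = -1 :=
    ZMod.nonsquare_iff_jacobiSym_eq_neg_one.mpr (by simpa using hx)
  rcases Nat.even_or_odd x.val with he | ho
  · refine ⟨x.val + ℓ, he.add_odd (hℓ.eq_two_or_odd'.resolve_left hℓ2), ?_⟩
    rw [jacobiSym_natCast_congr (Nat.add_modEq_right), hJ]
  · exact ⟨x.val, ho, hJ⟩

lemma not_dvd_four {p : ℕ} (hp : p.Prime) (hp2 : p ≠ 2) : ¬ p ∣ 4 := fun h ↦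
  hp2 ((Nat.prime_dvd_prime_iff_eq hp Nat.prime_two).mp (hp.dvd_of_dvd_pow (n := 2) h))

theorem exists_deltaDA_gt_of_not_dvd_of_not_four_dvd {ℓ : ℕ} (hℓ : ℓ.Prime) (hℓ2 : ℓ ≠ 2)
    {ε : ℝ} (hε : 0 < ε) :
    ∃ a d : ℕ, 1 ≤ a ∧ a < d ∧ Nat.Coprime a d ∧ ¬ ℓ ∣ d ∧ ¬ 4 ∣ d ∧
      (3 - 2 / ((ℓ : ℝ) * ((ℓ : ℝ) - 1))) / 4 - ε < deltaDA ℓ d a := by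
  obtain ⟨a, n, ha, han, hcop, hn, hEn, -, h⟩ := exists_artinConstant_mul_Rda_gt (m := 1)
    (E := {2, ℓ}) one_ne_zero le_rfl (Nat.coprime_one_left 1)
    (by simp [Nat.prime_two, hℓ, hℓ.ne_one]) (by simp) hε
  rw [one_mul] at han hcop h
  have hℓn : ¬ ℓ ∣ n := hEn ℓ (by simp)
  have h4n : ¬ 4 ∣ n := fun h4 ↦ by have := Nat.odd_iff.mp hn; omega
  refine ⟨a, n, ha, han, hcop, hℓn, h4n, ?_⟩
  rw [Nat.gcd_one_right, Nat.primeFactors_one, prod_empty, one_mul,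
    prod_insert (by simpa using hℓ2.symm), prod_singleton, artinFactor_two] at h
  rw [deltaDA_eq_cGen_mul, cGen_of_not_dvd_of_not_four_dvd hℓn h4n,
    ← three_add_div_mul_half_artinFactor hℓ.two_le]
  refine sub_lt_mul_of_one_sub_mul_lt (three_add_div_pos hℓ.two_le).le ?_ hε h
  rw [three_add_div_mul_half_artinFactor hℓ.two_le]
  have := div_nonneg zero_le_two (zero_lt_one.trans (one_lt_natCast_mul_sub_one hℓ.two_le)).le
  linarith

theorem exists_deltaDA_gt_of_not_dvd_of_four_dvd {ℓ : ℕ} (hℓ : ℓ.Prime) (hℓ2 : ℓ ≠ 2)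
    {ε : ℝ} (hε : 0 < ε) :
    ∃ a d : ℕ, 1 ≤ a ∧ a < d ∧ Nat.Coprime a d ∧ ¬ ℓ ∣ d ∧ 4 ∣ d ∧ a % 4 = 1 ∧
      1 / 2 - ε < deltaDA ℓ d a := by
  obtain ⟨a, n, ha, han, hcop, -, hEn, har, h⟩ := exists_artinConstant_mul_Rda_gt (m := 4)
    (E := {ℓ}) four_ne_zero le_rfl (Nat.coprime_one_left 4)
    (by simpa using ⟨hℓ, not_dvd_four hℓ hℓ2⟩) (by simp) hε
  have hℓd : ¬ ℓ ∣ 4 * n := fun h ↦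
    (hℓ.dvd_mul.mp h).elim (not_dvd_four hℓ hℓ2) (hEn ℓ (mem_singleton_self ℓ))
  have ha4 : a % 4 = 1 := har
  refine ⟨a, 4 * n, ha, han, hcop, hℓd, dvd_mul_right 4 n, ha4, ?_⟩
  have hG : (Nat.gcd (1 - 1) 4).primeFactors = {2} := by simp [Nat.primeFactors]
  rw [hG, prod_singleton, prod_singleton, one_sub_one_div_two] at h
  rw [deltaDA_eq_cGen_mul, cGen_of_not_dvd_of_four_dvd hℓd (dvd_mul_right 4 n) ha4,
    ← inv_artinFactor hℓ.two_le]
  have hf := artinFactor_pos hℓ.two_le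
  calc 1 / 2 - ε = (artinFactor ℓ)⁻¹ * (1 / 2 * artinFactor ℓ) - ε := by field_simp
    _ < _ := sub_lt_mul_of_one_sub_mul_lt (inv_nonneg.mpr hf.le) (by field_simp; norm_num) hε h

theorem exists_deltaDA_three_gt {ε : ℝ} (hε : 0 < ε) :
    ∃ a d : ℕ, 1 ≤ a ∧ a < d ∧ Nat.Coprime a d ∧ 3 ∣ d ∧ ¬ 4 ∣ d ∧ a % 3 = 1 ∧
      1 / 3 - ε < deltaDA 3 d a := by
  obtain ⟨a, n, ha, han, hcop, hn, -, har, h⟩ := exists_artinConstant_mul_Rda_gt (m := 6)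
    (E := ∅) (by norm_num) le_rfl (Nat.coprime_one_left 6) (by simp) (by norm_num) hε
  have h3 : 3 ∣ 6 * n := (show 3 ∣ 6 by norm_num).mul_right n
  have h4 : ¬ 4 ∣ 6 * n := fun h4 ↦ by have := Nat.odd_iff.mp hn; omega
  have ha3 : a % 3 = 1 := by have : a % 6 = 1 := har; omega
  have hj := jacobiSym_three_of_mod_three_eq_one ha3
  refine ⟨a, 6 * n, ha, han, hcop, h3, h4, ha3, ?_⟩
  have hG : (Nat.gcd (1 - 1) 6).primeFactors = {2, 3} := by simp [Nat.primeFactors]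
  rw [hG, prod_pair (by norm_num), prod_empty, mul_one, one_sub_one_div_two] at h
  rw [deltaDA_eq_cGen_mul, cGen_of_dvd_of_not_four_dvd h3 h4 hj]
  norm_num at h
  linarith

theorem exists_deltaDA_gt_of_four_dvd_of_mod_four_eq_three (ℓ : ℕ) {ε : ℝ} (hε : 0 < ε) :
    ∃ a d : ℕ, 1 ≤ a ∧ a < d ∧ Nat.Coprime a d ∧ 4 ∣ d ∧ a % 4 = 3 ∧
      1 - ε < deltaDA ℓ d a := by
  obtain ⟨a, n, ha, han, hcop, -, -, har, h⟩ := exists_artinConstant_mul_Rda_gt (m := 4) (r := 3)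
    (E := ∅) four_ne_zero (by norm_num) (by norm_num) (by simp) (by norm_num) hε
  have ha4 : a % 4 = 3 := har
  refine ⟨a, 4 * n, ha, han, hcop, dvd_mul_right 4 n, ha4, ?_⟩
  have hG : (Nat.gcd (3 - 1) 4).primeFactors = {2} := by simp [Nat.primeFactors]
  rw [hG, prod_singleton, prod_empty, mul_one, one_sub_one_div_two] at h
  rw [deltaDA_eq_cGen_mul, cGen_eq_two (.inl ⟨dvd_mul_right 4 n, ha4⟩)]
  linarith

lemma exists_artinConstant_mul_Rda_gt_of_two_mul {ℓ r : ℕ} (hℓ : ℓ.Prime) (hℓ2 : ℓ ≠ 2)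
    (hr : Odd r) (hr0 : ¬ ℓ ∣ r) (hr1 : ¬ ℓ ∣ r - 1) {ε : ℝ} (hε : 0 < ε) :
    ∃ a d : ℕ, 1 ≤ a ∧ a < d ∧ a.Coprime d ∧ ℓ ∣ d ∧ ¬ 4 ∣ d ∧
      jacobiSym a ℓ = jacobiSym r ℓ ∧ (1 - ε) * (1 / 2) < artinConstant * Rda d a := by
  obtain ⟨a, n, ha, han, hcop, hn, -, har, h⟩ := exists_artinConstant_mul_Rda_gt (m := 2 * ℓ)
    (E := ∅) (mul_ne_zero two_ne_zero hℓ.ne_zero) hr.pos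
    ((Nat.coprime_two_right.mpr hr).mul_right ((hℓ.coprime_iff_not_dvd.mpr hr0).symm))
    (by simp) (.inl (dvd_mul_right 2 ℓ)) hε
  have hgcd : Nat.gcd (r - 1) (2 * ℓ) = 2 := by
    rw [Nat.Coprime.gcd_mul_right_cancel_right 2 (hℓ.coprime_iff_not_dvd.mpr hr1),
      Nat.gcd_eq_right]
    have := Nat.odd_iff.mp hr
    omega
  have h4 : ¬ 4 ∣ 2 * ℓ * n := by
    have := Nat.odd_iff.mp ((hℓ.eq_two_or_odd'.resolve_left hℓ2).mul hn)
    rw [mul_assoc]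
    omega
  refine ⟨a, 2 * ℓ * n, ha, han, hcop, (dvd_mul_left ℓ 2).mul_right n, h4,
    jacobiSym_natCast_congr (har.of_mul_left 2), ?_⟩
  rwa [hgcd, Nat.prime_two.primeFactors, prod_singleton, prod_empty, mul_one,
    one_sub_one_div_two] at h

theorem exists_deltaDA_gt_of_dvd_of_jacobiSym_eq_one {ℓ : ℕ} (hℓ : ℓ.Prime) (hℓ3 : 3 < ℓ)
    {ε : ℝ} (hε : 0 < ε) :
    ∃ a d : ℕ, 1 ≤ a ∧ a < d ∧ Nat.Coprime a d ∧ ℓ ∣ d ∧ ¬ 4 ∣ d ∧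
      jacobiSym (a : ℤ) ℓ = 1 ∧ 1 / 2 - ε < deltaDA ℓ d a := by
  have h3 : ¬ ℓ ∣ 3 := fun h ↦ by have := Nat.le_of_dvd three_pos h; omega
  have h2 : ¬ ℓ ∣ 2 := fun h ↦ by have := Nat.le_of_dvd two_pos h; omega
  -- `9 = 3 ^ 2` is an odd square with `9 ≢ 0, 1 (mod ℓ)`.
  obtain ⟨a, d, ha, had, hcop, hℓd, h4, hj, h⟩ := exists_artinConstant_mul_Rda_gt_of_two_mul
    (r := 3 ^ 2) hℓ (by omega) (by decide) (fun h ↦ h3 (hℓ.dvd_of_dvd_pow h))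
    (fun h ↦ h2 (hℓ.dvd_of_dvd_pow (show ℓ ∣ 2 ^ 3 from h))) hε
  have hj1 : jacobiSym a ℓ = 1 := by
    rw [hj, Nat.cast_pow]
    exact jacobiSym.sq_one' (by
      rw [Int.gcd_natCast_natCast]
      exact (Nat.coprime_primes Nat.prime_three hℓ).mpr (by omega))
  refine ⟨a, d, ha, had, hcop, hℓd, h4, hj1, ?_⟩
  rw [deltaDA_eq_cGen_mul, cGen_of_dvd_of_not_four_dvd hℓd h4 hj1]
  linarith

theorem exists_deltaDA_gt_of_dvd_of_jacobiSym_eq_neg_one {ℓ : ℕ} (hℓ : ℓ.Prime) (hℓ2 : ℓ ≠ 2)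
    {ε : ℝ} (hε : 0 < ε) :
    ∃ a d : ℕ, 1 ≤ a ∧ a < d ∧ Nat.Coprime a d ∧ ℓ ∣ d ∧
      jacobiSym (a : ℤ) ℓ = -1 ∧ 1 - ε < deltaDA ℓ d a := by
  obtain ⟨r, hr, hrJ⟩ := exists_odd_jacobiSym_eq_neg_one hℓ hℓ2
  have hr0 : ¬ ℓ ∣ r := fun h ↦ by
    rw [jacobiSym_natCast_congr (Nat.modEq_zero_iff_dvd.mpr h), Nat.cast_zero,
      jacobiSym.zero_left hℓ.one_lt] at hrJ
    norm_num at hrJ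
  have hr1 : ¬ ℓ ∣ r - 1 := fun h ↦ by
    rw [jacobiSym_natCast_congr ((Nat.modEq_iff_dvd' hr.pos).mpr h).symm, Nat.cast_one,
      jacobiSym.one_left] at hrJ
    norm_num at hrJ
  obtain ⟨a, d, ha, had, hcop, hℓd, -, hj, h⟩ :=
    exists_artinConstant_mul_Rda_gt_of_two_mul hℓ hℓ2 hr hr0 hr1 hε
  refine ⟨a, d, ha, had, hcop, hℓd, hj.trans hrJ, ?_⟩
  rw [deltaDA_eq_cGen_mul, cGen_eq_two (.inr ⟨hℓd, hj.trans hrJ⟩)]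
  linarith

end Sharpness

/-- Extremal behavior of `δ_{d,a}` (Proposition `casesbounds`): for an odd
prime `ℓ` and coprime `1 ≤ a < d`, the stated strict upper bounds hold in the
six cases, `δ_{d,a} = 0` in the remaining case, and each bound is sharp: for
every `ε > 0` there are coprime `1 ≤ a < d` in the given case with `δ_{d,a}`
exceeding the bound minus `ε`. -/
theorem deltaDA_bounds (ℓ : ℕ) (hℓ : ℓ.Prime) (hodd : Odd ℓ) :
    (∀ a d : ℕ, 1 ≤ a → a < d → Nat.Coprime a d →
      (¬ ℓ ∣ d → ¬ 4 ∣ d →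
        deltaDA ℓ d a < (3 - 2 / ((ℓ : ℝ) * ((ℓ : ℝ) - 1))) / 4) ∧
      (¬ ℓ ∣ d → 4 ∣ d → a % 4 = 1 → deltaDA ℓ d a < 1 / 2) ∧
      (ℓ = 3 → 3 ∣ d → ¬ 4 ∣ d → a % 3 = 1 → deltaDA ℓ d a < 1 / 3) ∧
      (ℓ ∣ d → 3 < ℓ → ¬ 4 ∣ d → jacobiSym (a : ℤ) ℓ = 1 →
        deltaDA ℓ d a < 1 / 2) ∧
      (4 ∣ d → a % 4 = 3 → deltaDA ℓ d a < 1) ∧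
      (ℓ ∣ d → jacobiSym (a : ℤ) ℓ = -1 → deltaDA ℓ d a < 1) ∧
      (4 * ℓ ∣ d → jacobiSym (a : ℤ) ℓ = 1 → a % 4 = 1 → deltaDA ℓ d a = 0)) ∧
    (∀ ε : ℝ, 0 < ε →
      (∃ a d : ℕ, 1 ≤ a ∧ a < d ∧ Nat.Coprime a d ∧ ¬ ℓ ∣ d ∧ ¬ 4 ∣ d ∧
        (3 - 2 / ((ℓ : ℝ) * ((ℓ : ℝ) - 1))) / 4 - ε < deltaDA ℓ d a) ∧
      (∃ a d : ℕ, 1 ≤ a ∧ a < d ∧ Nat.Coprime a d ∧ ¬ ℓ ∣ d ∧ 4 ∣ d ∧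
        a % 4 = 1 ∧ 1 / 2 - ε < deltaDA ℓ d a) ∧
      (ℓ = 3 → ∃ a d : ℕ, 1 ≤ a ∧ a < d ∧ Nat.Coprime a d ∧ 3 ∣ d ∧ ¬ 4 ∣ d ∧
        a % 3 = 1 ∧ 1 / 3 - ε < deltaDA ℓ d a) ∧
      (3 < ℓ → ∃ a d : ℕ, 1 ≤ a ∧ a < d ∧ Nat.Coprime a d ∧ ℓ ∣ d ∧ ¬ 4 ∣ d ∧
        jacobiSym (a : ℤ) ℓ = 1 ∧ 1 / 2 - ε < deltaDA ℓ d a) ∧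
      (∃ a d : ℕ, 1 ≤ a ∧ a < d ∧ Nat.Coprime a d ∧ 4 ∣ d ∧ a % 4 = 3 ∧
        1 - ε < deltaDA ℓ d a) ∧
      (∃ a d : ℕ, 1 ≤ a ∧ a < d ∧ Nat.Coprime a d ∧ ℓ ∣ d ∧
        jacobiSym (a : ℤ) ℓ = -1 ∧ 1 - ε < deltaDA ℓ d a)) := by
  have hℓ2 : ℓ ≠ 2 := by
    rintro rfl
    exact absurd hodd (by decide)
  refine ⟨fun a d _ had hcop ↦ deltaDA_upper_bounds hℓ hℓ2 (by omega) hcop,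
    fun ε hε ↦ ⟨exists_deltaDA_gt_of_not_dvd_of_not_four_dvd hℓ hℓ2 hε,
      exists_deltaDA_gt_of_not_dvd_of_four_dvd hℓ hℓ2 hε, ?_,
      fun hℓ3 ↦ exists_deltaDA_gt_of_dvd_of_jacobiSym_eq_one hℓ hℓ3 hε,
      exists_deltaDA_gt_of_four_dvd_of_mod_four_eq_three ℓ hε,
      exists_deltaDA_gt_of_dvd_of_jacobiSym_eq_neg_one hℓ hℓ2 hε⟩⟩
  rintro rfl
  exact exists_deltaDA_three_gt hε
end
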